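/- arXiv:1811.12407 — 13 statements merged into one kernel-verified Lean document; each statement's English description precedes it below -/
import Mathlib

section
/- Let f ∈ E be a one-dimensional element. Then f is sharp if and only if f is extremal. -/
variable {V : Type*} [AddCommGroup V] [Module ℝ V]

/-- `P` is a pointed convex cone: closed under addition, nonnegative scalar
multiplication, and `P ∩ (-P) = {0}`. -/
def IsCone (P : Set V) : Prop :=
  (∀ x ∈ P, ∀ y ∈ P, x + y ∈ P) ∧
  (∀ c : ℝ, 0 ≤ c → ∀ x ∈ P, c • x ∈ P) ∧
  (∀ x ∈ P, -x ∈ P → x = 0)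

/-- The order induced by the cone `P`: `v ≤ w` iff `w - v ∈ P`. -/
def leC (P : Set V) (v w : V) : Prop := w - v ∈ P

/-- The linear effect algebra `E = [0, u]`. -/
def Eff (P : Set V) (u : V) : Set V := {v | leC P 0 v ∧ leC P v u}

/-- `f` is a sharp element of `[0, u]`. -/
def Sharp (P : Set V) (u f : V) : Prop :=
  f ∈ Eff P u ∧ ∀ g ∈ Eff P u, leC P g f → leC P g (u - f) → g = 0

/-- `f` is a one-dimensional element of `[0, u]`. -/
def OneDim (P : Set V) (u f : V) : Prop :=
  f ∈ Eff P u ∧ f ≠ 0 ∧ ∀ g ∈ Eff P u, leC P g f → ∃ t : ℝ, 0 ≤ t ∧ t ≤ 1 ∧ g = t • f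

/-- The set of sharp one-dimensional elements of `[0, u]`. -/
def S1 (P : Set V) (u : V) : Set V := {f | Sharp P u f ∧ OneDim P u f}

/-- A context: a finite family of sharp one-dimensional elements summing to `u`. -/
def IsContext (P : Set V) (u : V) {n : ℕ} (a : Fin n → V) : Prop :=
  (∀ i, a i ∈ S1 P u) ∧ ∑ i, a i = u

/-- The effect algebra `[0, u]` is spectral. -/
def Spectral (P : Set V) (u : V) : Prop :=
  ∀ f ∈ Eff P u, ∃ (n : ℕ) (a : Fin n → V) (μ : Fin n → ℝ),
    IsContext P u a ∧ (∀ i, 0 ≤ μ i ∧ μ i ≤ 1) ∧ f = ∑ i, μ i • a i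

/-- A state on `[0, u]`: a positive linear functional with `s u = 1`. -/
def IsState (P : Set V) (u : V) (s : V →ₗ[ℝ] ℝ) : Prop :=
  (∀ p ∈ P, 0 ≤ s p) ∧ s u = 1

lemma sharp_bound (P : Set V) (hP : IsCone P) (u f : V) (hsh : Sharp P u f)
    (hf0 : f ≠ 0) (hfP : f ∈ P) {c : ℝ} (hc : u - c • f ∈ P) : c ≤ 1 := by
  by_contra h
  push_neg at h
  set ε : ℝ := min (c - 1) 1 with hε
  have hε0 : 0 < ε := lt_min (by linarith) one_pos
  have hgE : ε • f ∈ Eff P u := by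
    constructor
    · show ε • f - 0 ∈ P
      simpa using hP.2.1 ε hε0.le f hfP
    · show u - ε • f ∈ P
      have h1 : u - ε • f = (u - c • f) + (c - ε) • f := by module
      rw [h1]
      exact hP.1 _ hc _ (hP.2.1 _ (by have := min_le_left (c-1) 1; linarith) f hfP)
  have hgf : leC P (ε • f) f := by
    show f - ε • f ∈ P
    have h1 : f - ε • f = (1 - ε) • f := by module
    rw [h1]
    exact hP.2.1 _ (by have := min_le_right (c-1) 1; linarith) f hfP
  have hgu : leC P (ε • f) (u - f) := by
    show (u - f) - ε • f ∈ P
    have h1 : (u - f) - ε • f = (u - c • f) + (c - 1 - ε) • f := by module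
    rw [h1]
    exact hP.1 _ hc _ (hP.2.1 _ (by have := min_le_left (c-1) 1; linarith) f hfP)
  have := hsh.2 _ hgE hgf hgu
  rcases smul_eq_zero.1 this with h' | h'
  · exact hε0.ne' h'
  · exact hf0 h'

/-- A one-dimensional element of a convex effect algebra is sharp iff it is extremal. -/
theorem stmt_0 (P : Set V) (hP : IsCone P) (u : V) (hu : u ∈ P)
    (f : V) (hf : OneDim P u f) :
    Sharp P u f ↔
      (∀ g₁ ∈ Eff P u, ∀ g₂ ∈ Eff P u, ∀ t : ℝ, 0 < t → t < 1 →
        f = t • g₁ + (1 - t) • g₂ → f = g₁ ∧ f = g₂) := by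
  obtain ⟨hfE, hf0, hone⟩ := hf
  have hfP : f ∈ P := by simpa [leC] using hfE.1
  have h0P : (0 : V) ∈ P := by simpa using hP.2.1 0 le_rfl u hu
  constructor
  · intro hsh g₁ hg₁ g₂ hg₂ t ht0 ht1 hsum
    have hg₁P : g₁ ∈ P := by simpa [leC] using hg₁.1
    have hg₂P : g₂ ∈ P := by simpa [leC] using hg₂.1
    have ht1' : (0:ℝ) ≤ 1 - t := by linarith
    -- t•g₁ ≤ f
    have hle₁ : f - t • g₁ ∈ P := by
      have h1 : f - t • g₁ = (1 - t) • g₂ := by rw [hsum]; module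
      rw [h1]; exact hP.2.1 _ ht1' _ hg₂P
    have hle₂ : f - (1 - t) • g₂ ∈ P := by
      have h1 : f - (1 - t) • g₂ = t • g₁ := by rw [hsum]; module
      rw [h1]; exact hP.2.1 _ ht0.le _ hg₁P
    have hufP : u - f ∈ P := hfE.2
    have hE₁ : t • g₁ ∈ Eff P u := by
      refine ⟨by simpa [leC] using hP.2.1 t ht0.le _ hg₁P, ?_⟩
      show u - t • g₁ ∈ P
      have h1 : u - t • g₁ = (u - f) + (f - t • g₁) := by module
      rw [h1]; exact hP.1 _ hufP _ hle₁
    have hE₂ : (1 - t) • g₂ ∈ Eff P u := by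
      refine ⟨by simpa [leC] using hP.2.1 _ ht1' _ hg₂P, ?_⟩
      show u - (1 - t) • g₂ ∈ P
      have h1 : u - (1 - t) • g₂ = (u - f) + (f - (1 - t) • g₂) := by module
      rw [h1]; exact hP.1 _ hufP _ hle₂
    obtain ⟨s₁, hs₁0, hs₁1, he₁⟩ := hone _ hE₁ hle₁
    obtain ⟨s₂, hs₂0, hs₂1, he₂⟩ := hone _ hE₂ hle₂
    have hsum' : s₁ + s₂ = 1 := by
      have h1 : (1 - (s₁ + s₂)) • f = 0 := by
        have hfe : f - (s₁ • f + s₂ • f) = 0 := by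
          rw [← he₁, ← he₂, ← hsum]; simp
        calc (1 - (s₁ + s₂)) • f = f - (s₁ • f + s₂ • f) := by module
          _ = 0 := hfe
      rcases smul_eq_zero.1 h1 with h' | h'
      · linarith [sub_eq_zero.1 (by linarith [h'] : (1:ℝ) - (s₁ + s₂) = 0)]
      · exact absurd h' hf0
    -- g₁ = (s₁/t) • f
    have hg₁f : g₁ = (s₁ / t) • f := by
      have : g₁ = t⁻¹ • (t • g₁) := by rw [smul_smul, inv_mul_cancel₀ ht0.ne', one_smul]
      rw [this, he₁, smul_smul, div_eq_inv_mul]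
    have hg₂f : g₂ = (s₂ / (1 - t)) • f := by
      have : g₂ = (1-t)⁻¹ • ((1-t) • g₂) := by
        rw [smul_smul, inv_mul_cancel₀ (by linarith : (1:ℝ) - t ≠ 0), one_smul]
      rw [this, he₂, smul_smul, div_eq_inv_mul]
    have hb₁ : s₁ / t ≤ 1 := by
      refine sharp_bound P hP u f hsh hf0 hfP ?_
      have := hg₁.2; rwa [leC, hg₁f] at this
    have hb₂ : s₂ / (1 - t) ≤ 1 := by
      refine sharp_bound P hP u f hsh hf0 hfP ?_
      have := hg₂.2; rwa [leC, hg₂f] at this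
    have hs₁t : s₁ ≤ t := by rwa [div_le_one ht0] at hb₁
    have hs₂t : s₂ ≤ 1 - t := by rwa [div_le_one (by linarith)] at hb₂
    have hs₁e : s₁ = t := by linarith
    have hs₂e : s₂ = 1 - t := by linarith
    constructor
    · rw [hg₁f, hs₁e, div_self ht0.ne', one_smul]
    · rw [hg₂f, hs₂e, div_self (by linarith : (1:ℝ) - t ≠ 0), one_smul]
  · intro hext
    refine ⟨hfE, fun g hg hgf hgu => ?_⟩
    obtain ⟨s, hs0, hs1, rfl⟩ := hone g hg hgf
    rcases eq_or_lt_of_le hs0 with h | hs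
    · rw [← h, zero_smul]
    · exfalso
      have hsE : (1 + s) • f ∈ Eff P u := by
        refine ⟨by simpa [leC] using hP.2.1 (1+s) (by linarith) f hfP, ?_⟩
        show u - (1 + s) • f ∈ P
        have h1 : u - (1 + s) • f = (u - f) - s • f := by module
        rw [h1]; exact hgu
      have h0E : (0 : V) ∈ Eff P u := by
        refine ⟨by simpa [leC], ?_⟩
        show u - 0 ∈ P; simpa using hu
      have ht0 : 0 < 1 / (1 + s) := by positivity
      have ht1 : 1 / (1 + s) < 1 := by
        rw [div_lt_one (by linarith)]; linarith
      have hfeq : f = (1 / (1 + s)) • ((1 + s) • f) + (1 - 1 / (1 + s)) • (0 : V) := by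
        rw [smul_zero, add_zero, smul_smul, one_div,
          inv_mul_cancel₀ (by linarith : (1:ℝ) + s ≠ 0), one_smul]
      have := (hext _ hsE _ h0E _ ht0 ht1 hfeq).2
      exact hf0 this
end

section
/- Let f ∈ E have a spectral decomposition f = Σᵢ₌₁ⁿ μᵢaᵢ. Then sup over s ∈ 𝔖(E) of s(f) equals max{μ₁,…,μₙ} and inf over s ∈ 𝔖(E) of s(f) equals min{μ₁,…,μₙ}, and both the supremum and the infimum are attained at some state. -/
variable {V : Type*} [AddCommGroup V] [Module ℝ V]

section aux
variable (P : Set V) (u : V) {n : ℕ} (a : Fin n → V) (μ : Fin n → ℝ)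

lemma state_basic (ha : IsContext P u a) (s : V →ₗ[ℝ] ℝ) (hs : IsState P u s) :
    (∀ i, 0 ≤ s (a i)) ∧ ∑ i, s (a i) = 1 := by
  constructor
  · intro i
    have h := ((ha.1 i).1.1).1
    simp only [leC, sub_zero] at h
    exact hs.1 _ h
  · rw [← map_sum, ha.2, hs.2]

lemma sf_eq (ha : IsContext P u a) {f : V} (hdec : f = ∑ i, μ i • a i)
    (s : V →ₗ[ℝ] ℝ) : s f = ∑ i, μ i * s (a i) := by
  rw [hdec, map_sum]; simp [map_smul]

lemma attain (ha : IsContext P u a)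
    (hstate : ∀ b ∈ S1 P u, ∃ s : V →ₗ[ℝ] ℝ, IsState P u s ∧ s b = 1)
    {f : V} (hdec : f = ∑ i, μ i • a i) (i0 : Fin n) :
    ∃ s : V →ₗ[ℝ] ℝ, IsState P u s ∧ s f = μ i0 := by
  obtain ⟨s, hs, hs1⟩ := hstate (a i0) (ha.1 i0)
  refine ⟨s, hs, ?_⟩
  obtain ⟨hnn, hsum⟩ := state_basic P u a ha s hs
  have hzero : ∀ j ∈ Finset.univ.erase i0, s (a j) = 0 := by
    have hsum' : ∑ j ∈ Finset.univ.erase i0, s (a j) = 0 := by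
      have := Finset.add_sum_erase Finset.univ (fun j => s (a j)) (Finset.mem_univ i0)
      linarith
    intro j hj
    exact (Finset.sum_eq_zero_iff_of_nonneg (fun j _ => hnn j)).mp hsum' j hj
  rw [sf_eq P u a μ ha hdec s]
  rw [Finset.sum_eq_single i0 (fun j _ hj => by rw [hzero j (Finset.mem_erase.mpr ⟨hj, Finset.mem_univ j⟩)]; ring) (by simp)]
  rw [hs1, mul_one]

end aux

/-- For a spectral decomposition `f = ∑ μᵢ aᵢ`, the supremum of `s f` over states `s`
equals `max μᵢ` and the infimum equals `min μᵢ`, and both are attained. -/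
theorem stmt_1 (P : Set V) (hP : IsCone P) (u : V) (hu : u ∈ P)
    (hstate : ∀ a ∈ S1 P u, ∃ s : V →ₗ[ℝ] ℝ, IsState P u s ∧ s a = 1)
    (f : V) (hf : f ∈ Eff P u) (n : ℕ) (hn : 0 < n)
    (a : Fin n → V) (μ : Fin n → ℝ) (ha : IsContext P u a)
    (hμ : ∀ i, 0 ≤ μ i ∧ μ i ≤ 1) (hdec : f = ∑ i, μ i • a i) :
    IsGreatest {x : ℝ | ∃ s : V →ₗ[ℝ] ℝ, IsState P u s ∧ s f = x}
      (Finset.univ.sup' ⟨⟨0, hn⟩, Finset.mem_univ _⟩ μ) ∧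
    IsLeast {x : ℝ | ∃ s : V →ₗ[ℝ] ℝ, IsState P u s ∧ s f = x}
      (Finset.univ.inf' ⟨⟨0, hn⟩, Finset.mem_univ _⟩ μ) := by
  have hne : (Finset.univ : Finset (Fin n)).Nonempty := ⟨⟨0, hn⟩, Finset.mem_univ _⟩
  constructor
  · constructor
    · obtain ⟨i0, _, hi0⟩ := Finset.exists_mem_eq_sup' hne μ
      rw [hi0]
      exact attain P u a μ ha hstate hdec i0
    · rintro x ⟨s, hs, rfl⟩
      obtain ⟨hnn, hsum⟩ := state_basic P u a ha s hs
      rw [sf_eq P u a μ ha hdec s]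
      calc ∑ i, μ i * s (a i)
          ≤ ∑ i, (Finset.univ.sup' hne μ) * s (a i) :=
            Finset.sum_le_sum fun i _ =>
              mul_le_mul_of_nonneg_right (Finset.le_sup' μ (Finset.mem_univ i)) (hnn i)
        _ = Finset.univ.sup' hne μ := by rw [← Finset.mul_sum, hsum, mul_one]
  · constructor
    · obtain ⟨i0, _, hi0⟩ := Finset.exists_mem_eq_inf' hne μ
      rw [hi0]
      exact attain P u a μ ha hstate hdec i0
    · rintro x ⟨s, hs, rfl⟩
      obtain ⟨hnn, hsum⟩ := state_basic P u a ha s hs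
      rw [sf_eq P u a μ ha hdec s]
      calc Finset.univ.inf' hne μ
          = ∑ i, (Finset.univ.inf' hne μ) * s (a i) := by rw [← Finset.mul_sum, hsum, mul_one]
        _ ≤ ∑ i, μ i * s (a i) :=
            Finset.sum_le_sum fun i _ =>
              mul_le_mul_of_nonneg_right (Finset.inf'_le μ (Finset.mem_univ i)) (hnn i)
end

section
/- Suppose E is spectral and u is an order unit of V (for every v ∈ V there is λ > 0 with −λu ≤ v ≤ λu). Then for every v ∈ V there exist a context a₁, …, aₙ and real numbers t₁, …, tₙ such that v = Σᵢ tᵢaᵢ. -/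
variable {V : Type*} [AddCommGroup V] [Module ℝ V]

/-- In a spectral effect algebra with `u` an order unit, every vector of the
embedding space has a spectral decomposition over some context. -/
theorem stmt_2 (P : Set V) (hP : IsCone P) (u : V) (hu : u ∈ P)
    (hspec : Spectral P u)
    (horder : ∀ v : V, ∃ l : ℝ, 0 < l ∧ leC P (-(l • u)) v ∧ leC P v (l • u)) :
    ∀ v : V, ∃ (n : ℕ) (a : Fin n → V) (t : Fin n → ℝ),
      IsContext P u a ∧ v = ∑ i, t i • a i := by
  intro v
  obtain ⟨l, hl, h1, h2⟩ := horder v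
  obtain ⟨-, hscale, -⟩ := hP
  have hinv : (0:ℝ) ≤ (2*l)⁻¹ := by positivity
  set f : V := (2*l)⁻¹ • (v + l • u) with hf
  have hfE : f ∈ Eff P u := by
    constructor
    · have : v + l • u ∈ P := by
        have := h1; unfold leC at this
        simpa [sub_neg_eq_add, add_comm] using this
      simpa [leC, hf] using hscale _ hinv _ this
    · have hm : l • u - v ∈ P := by
        have := h2; unfold leC at this; exact this
      have : (2*l)⁻¹ • (l • u - v) ∈ P := hscale _ hinv _ hm
      have heq : u - f = (2*l)⁻¹ • (l • u - v) := by
        rw [hf]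
        match_scalars <;> field_simp <;> ring
      rw [leC, heq]; exact this
  obtain ⟨n, a, μ, hctx, hμ, hfsum⟩ := hspec f hfE
  refine ⟨n, a, fun i => 2*l*μ i - l, hctx, ?_⟩
  have hv : v = (2*l) • f - l • u := by
    rw [hf]
    match_scalars <;> field_simp <;> ring
  rw [hv, hfsum, ← hctx.2, Finset.smul_sum, Finset.smul_sum, ← Finset.sum_sub_distrib]
  congr 1; ext i
  rw [smul_smul, sub_smul]
end

section
/- Suppose E is spectral and u is an order unit of V (for every v ∈ V there is λ > 0 with −λu ≤ v ≤ λu). Then the set of states of E is order determining: if a, b ∈ E satisfy s(a) ≤ s(b) for every state s ∈ 𝔖(E), then a ≤ b. -/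
variable {V : Type*} [AddCommGroup V] [Module ℝ V]

lemma cone_zero' {P : Set V} (hP : IsCone P) {u : V} (hu : u ∈ P) : (0:V) ∈ P := by
  have := hP.2.1 0 le_rfl u hu
  simpa using this

lemma cone_sum' {P : Set V} (hP : IsCone P) {u : V} (hu : u ∈ P)
    {ι : Type*} [DecidableEq ι] (s : Finset ι) (g : ι → V) (hg : ∀ i ∈ s, g i ∈ P) :
    ∑ i ∈ s, g i ∈ P := by
  induction s using Finset.induction_on with
  | empty => simpa using cone_zero' hP hu
  | @insert i s hi ih =>
    rw [Finset.sum_insert hi]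
    exact hP.1 _ (hg i (Finset.mem_insert_self _ _)) _
      (ih fun j hj => hg j (Finset.mem_insert_of_mem hj))

/-- A spectral effect algebra (with `u` an order unit) has an order determining
set of states. -/
theorem stmt_3 (P : Set V) (hP : IsCone P) (u : V) (hu : u ∈ P)
    (hspec : Spectral P u)
    (horder : ∀ v : V, ∃ l : ℝ, 0 < l ∧ leC P (-(l • u)) v ∧ leC P v (l • u))
    (hstate : ∀ a ∈ S1 P u, ∃ s : V →ₗ[ℝ] ℝ, IsState P u s ∧ s a = 1) :
    ∀ a ∈ Eff P u, ∀ b ∈ Eff P u,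
      (∀ s : V →ₗ[ℝ] ℝ, IsState P u s → s a ≤ s b) → leC P a b := by
  intro a ha b hb hsab
  obtain ⟨l, hl, h1, h2⟩ := horder (b - a)
  have hd1 : b - a + l • u ∈ P := by
    have : b - a - -(l • u) ∈ P := h1
    simpa [sub_neg_eq_add] using this
  have hd2 : l • u - (b - a) ∈ P := by
    simpa [leC] using h2
  have hlne : (2 * l) ≠ 0 := by positivity
  have hinv : (0:ℝ) < (2 * l)⁻¹ := by positivity
  set f : V := (2 * l)⁻¹ • (b - a + l • u) with hf
  have hfE : f ∈ Eff P u := by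
    constructor
    · show f - 0 ∈ P
      rw [sub_zero]
      exact hP.2.1 _ hinv.le _ hd1
    · show u - f ∈ P
      have heq : u - f = (2 * l)⁻¹ • (l • u - (b - a)) := by
        rw [hf]
        match_scalars <;> field_simp <;> ring
      rw [heq]
      exact hP.2.1 _ hinv.le _ hd2
  obtain ⟨n, aF, μ, ⟨hS1, hsum⟩, hμ, hdec⟩ := hspec f hfE
  have haP : ∀ i, aF i ∈ P := fun i => by
    have := (hS1 i).1.1.1
    simpa [leC] using this
  -- each μ i ≥ 1/2
  have hμhalf : ∀ i, (1:ℝ)/2 ≤ μ i := by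
    intro i
    obtain ⟨s, hsSt, hsi⟩ := hstate (aF i) (hS1 i)
    -- s (aF j) = 0 for j ≠ i
    have hsumj : ∑ j, s (aF j) = 1 := by
      rw [← map_sum, hsum, hsSt.2]
    have hnon : ∀ j, 0 ≤ s (aF j) := fun j => hsSt.1 _ (haP j)
    have hzero : ∀ j, j ≠ i → s (aF j) = 0 := by
      intro j hj
      have herase : ∑ k ∈ Finset.univ.erase i, s (aF k) = 0 := by
        have := Finset.add_sum_erase Finset.univ (fun k => s (aF k))
          (Finset.mem_univ i)
        rw [hsumj] at this
        linarith [this, hsi]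
      have := (Finset.sum_eq_zero_iff_of_nonneg
        (fun k _ => hnon k)).mp herase j (Finset.mem_erase.mpr ⟨hj, Finset.mem_univ j⟩)
      exact this
    have hsf : s f = μ i := by
      rw [hdec, map_sum]
      rw [Finset.sum_eq_single i]
      · simp [hsi]
      · intro j _ hj
        simp [hzero j hj]
      · intro h; exact absurd (Finset.mem_univ i) h
    have hsba : 0 ≤ s (b - a) := by
      have := hsab s hsSt
      rw [map_sub]; linarith
    have : s f = (2 * l)⁻¹ * (s (b - a) + l) := by
      rw [hf, map_smul, map_add, map_smul, hsSt.2]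
      simp [smul_eq_mul]
    rw [hsf] at this
    rw [this, inv_mul_eq_div, le_div_iff₀ (by positivity : (0:ℝ) < 2 * l)]
    nlinarith
  -- express b - a as a nonnegative combination
  have hba : b - a = ∑ i, (2 * l * μ i - l) • aF i := by
    have h2f : b - a = (2 * l) • f - l • u := by
      rw [hf]
      match_scalars <;> field_simp <;> ring
    rw [h2f, hdec, ← hsum, Finset.smul_sum, Finset.smul_sum,
      ← Finset.sum_sub_distrib]
    congr 1
    ext i
    rw [smul_smul, ← sub_smul]
  show b - a ∈ P
  rw [hba]
  apply cone_sum' hP hu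
  intro i _
  apply hP.2.1
  · have := hμhalf i
    nlinarith
  · exact haP i
end

section
/- Let f ∈ E have two spectral decompositions Σᵢ₌₁ⁿ μᵢaᵢ = f = Σⱼ₌₁ᵐ νⱼbⱼ. Then max{μ₁,…,μₙ} = max{ν₁,…,νₘ} and min{μ₁,…,μₙ} = min{ν₁,…,νₘ}. -/
variable {V : Type*} [AddCommGroup V] [Module ℝ V]

theorem aux_bound (P : Set V) (u : V)
    (hstate : ∀ a ∈ S1 P u, ∃ s : V →ₗ[ℝ] ℝ, IsState P u s ∧ s a = 1)
    {n m : ℕ} (hne : (Finset.univ : Finset (Fin m)).Nonempty)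
    (a : Fin n → V) (μ : Fin n → ℝ) (b : Fin m → V) (ν : Fin m → ℝ)
    (ha : IsContext P u a) (hb : IsContext P u b)
    (heq : ∑ i, μ i • a i = ∑ j, ν j • b j) (i : Fin n) :
    Finset.univ.inf' hne ν ≤ μ i ∧ μ i ≤ Finset.univ.sup' hne ν := by
  obtain ⟨s, ⟨hpos, hsu⟩, hsa⟩ := hstate (a i) (ha.1 i)
  have hapos : ∀ j, 0 ≤ s (a j) := fun j =>
    hpos _ (by simpa [leC, sub_zero] using (ha.1 j).1.1.1)
  have hbpos : ∀ j, 0 ≤ s (b j) := fun j =>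
    hpos _ (by simpa [leC, sub_zero] using (hb.1 j).1.1.1)
  have hsum_a : ∑ j, s (a j) = 1 := by rw [← map_sum, ha.2, hsu]
  have hsum_b : ∑ j, s (b j) = 1 := by rw [← map_sum, hb.2, hsu]
  have hzero : ∀ j, j ≠ i → s (a j) = 0 := by
    have h1 : ∑ j ∈ Finset.univ.erase i, s (a j) = 0 := by
      have h2 := Finset.add_sum_erase Finset.univ (fun j => s (a j)) (Finset.mem_univ i)
      simp only [hsum_a] at h2
      simp only [hsa] at h2
      linarith
    intro j hj
    exact (Finset.sum_eq_zero_iff_of_nonneg (fun j _ => hapos j)).1 h1 j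
      (Finset.mem_erase.2 ⟨hj, Finset.mem_univ j⟩)
  have hsf : s (∑ i, μ i • a i) = μ i := by
    rw [map_sum]
    simp only [map_smul, smul_eq_mul]
    rw [Finset.sum_eq_single i (fun j _ hj => by rw [hzero j hj]; ring)
      (fun h => absurd (Finset.mem_univ i) h), hsa, mul_one]
  have hsg : s (∑ j, ν j • b j) = ∑ j, ν j * s (b j) := by
    rw [map_sum]; simp only [map_smul, smul_eq_mul]
  have hmain : μ i = ∑ j, ν j * s (b j) := by rw [← hsf, heq, hsg]
  constructor
  · rw [hmain]
    calc Finset.univ.inf' hne ν = Finset.univ.inf' hne ν * ∑ j, s (b j) := by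
          rw [hsum_b, mul_one]
      _ = ∑ j, Finset.univ.inf' hne ν * s (b j) := by rw [Finset.mul_sum]
      _ ≤ ∑ j, ν j * s (b j) := Finset.sum_le_sum (fun j _ =>
          mul_le_mul_of_nonneg_right (Finset.inf'_le ν (Finset.mem_univ j)) (hbpos j))
  · rw [hmain]
    calc ∑ j, ν j * s (b j) ≤ ∑ j, Finset.univ.sup' hne ν * s (b j) :=
          Finset.sum_le_sum (fun j _ =>
            mul_le_mul_of_nonneg_right (Finset.le_sup' ν (Finset.mem_univ j)) (hbpos j))
      _ = Finset.univ.sup' hne ν * ∑ j, s (b j) := by rw [Finset.mul_sum]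
      _ = Finset.univ.sup' hne ν := by rw [hsum_b, mul_one]

/-- Two spectral decompositions of the same effect have the same maximal and the
same minimal coefficient. -/
theorem stmt_4 (P : Set V) (hP : IsCone P) (u : V) (hu : u ∈ P)
    (hstate : ∀ a ∈ S1 P u, ∃ s : V →ₗ[ℝ] ℝ, IsState P u s ∧ s a = 1)
    (f : V) (hf : f ∈ Eff P u)
    (n m : ℕ) (hn : 0 < n) (hm : 0 < m)
    (a : Fin n → V) (μ : Fin n → ℝ) (b : Fin m → V) (ν : Fin m → ℝ)
    (ha : IsContext P u a) (hb : IsContext P u b)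
    (hμ : ∀ i, 0 ≤ μ i ∧ μ i ≤ 1) (hν : ∀ j, 0 ≤ ν j ∧ ν j ≤ 1)
    (hfa : f = ∑ i, μ i • a i) (hfb : f = ∑ j, ν j • b j) :
    Finset.univ.sup' ⟨⟨0, hn⟩, Finset.mem_univ _⟩ μ =
      Finset.univ.sup' ⟨⟨0, hm⟩, Finset.mem_univ _⟩ ν ∧
    Finset.univ.inf' ⟨⟨0, hn⟩, Finset.mem_univ _⟩ μ =
      Finset.univ.inf' ⟨⟨0, hm⟩, Finset.mem_univ _⟩ ν := by
  have heq : ∑ i, μ i • a i = ∑ j, ν j • b j := by rw [← hfa, ← hfb]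
  have h1 := fun i => aux_bound P u hstate ⟨⟨0, hm⟩, Finset.mem_univ _⟩ a μ b ν ha hb heq i
  have h2 := fun j => aux_bound P u hstate ⟨⟨0, hn⟩, Finset.mem_univ _⟩ b ν a μ hb ha heq.symm j
  constructor
  · apply le_antisymm
    · exact Finset.sup'_le _ _ (fun i _ => (h1 i).2)
    · exact Finset.sup'_le _ _ (fun j _ => (h2 j).2)
  · apply le_antisymm
    · exact Finset.le_inf' _ _ (fun j _ => (h2 j).1)
    · exact Finset.le_inf' _ _ (fun i _ => (h1 i).1)
end

section
/- Suppose E is spectral. Then every E-exposed point of 𝔖(E) has the form â for some a ∈ S₁(E): if s ∈ 𝔖(E) and f ∈ E are such that {s' ∈ 𝔖(E) : s'(f) = 1} = {s}, then there exists a ∈ S₁(E) with â = {s}. -/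
variable {V : Type*} [AddCommGroup V] [Module ℝ V]

/-- In a spectral effect algebra, every `E`-exposed point of the state space is of
the form `â` for some sharp one-dimensional element `a`. -/
theorem stmt_5 (P : Set V) (hP : IsCone P) (u : V) (hu : u ∈ P)
    (hspec : Spectral P u)
    (hstate : ∀ a ∈ S1 P u, ∃ s : V →ₗ[ℝ] ℝ, IsState P u s ∧ s a = 1)
    (s : V →ₗ[ℝ] ℝ) (hs : IsState P u s) (f : V) (hf : f ∈ Eff P u)
    (hexp : {s' : V →ₗ[ℝ] ℝ | IsState P u s' ∧ s' f = 1} = {s}) :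
    ∃ a ∈ S1 P u, {s' : V →ₗ[ℝ] ℝ | IsState P u s' ∧ s' a = 1} = {s} := by
  have hs_in : IsState P u s ∧ s f = 1 := by
    have hmem : s ∈ ({s} : Set (V →ₗ[ℝ] ℝ)) := rfl
    rw [← hexp] at hmem; exact hmem
  obtain ⟨n, a, μ, ⟨ha, hsum⟩, hμ, hfeq⟩ := hspec f hf
  have haP : ∀ i, a i ∈ P := fun i => by
    have h := (ha i).1.1.1
    simpa [leC] using h
  have hsumt : ∀ (t : V →ₗ[ℝ] ℝ), IsState P u t → ∑ i, t (a i) = 1 := by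
    intro t ht
    have h : t (∑ i, a i) = 1 := by rw [hsum]; exact ht.2
    simpa [map_sum] using h
  have hft : ∀ (t : V →ₗ[ℝ] ℝ), IsState P u t → t f = ∑ i, μ i * t (a i) := by
    intro t ht
    rw [hfeq, map_sum]
    simp [smul_eq_mul]
  have hkey : ∀ (t : V →ₗ[ℝ] ℝ), IsState P u t → ∀ j, t (a j) = 1 → t f = μ j := by
    intro t ht j htj
    have hsum0 : ∑ i ∈ Finset.univ.erase j, t (a i) = 0 := by
      have h := hsumt t ht
      rw [← Finset.add_sum_erase _ _ (Finset.mem_univ j), htj] at h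
      linarith
    have hzero : ∀ i ∈ Finset.univ.erase j, t (a i) = 0 :=
      fun i hi => (Finset.sum_eq_zero_iff_of_nonneg
        (fun i _ => ht.1 _ (haP i))).mp hsum0 i hi
    rw [hft t ht, ← Finset.add_sum_erase _ _ (Finset.mem_univ j), htj,
      Finset.sum_eq_zero (fun i hi => by rw [hzero i hi, mul_zero])]
    ring
  have hterm : ∀ i, (1 - μ i) * s (a i) = 0 := by
    have hsum0 : ∑ i, (1 - μ i) * s (a i) = 0 := by
      have h1 := hsumt s hs
      have h2 := hft s hs
      rw [hs_in.2] at h2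
      have h3 : ∑ i, (1 - μ i) * s (a i)
          = ∑ i, s (a i) - ∑ i, μ i * s (a i) := by
        rw [← Finset.sum_sub_distrib]
        exact Finset.sum_congr rfl (fun i _ => by ring)
      rw [h3, h1, ← h2]; ring
    intro i
    exact (Finset.sum_eq_zero_iff_of_nonneg
      (fun i _ => mul_nonneg (by linarith [(hμ i).2]) (hs.1 _ (haP i)))).mp
      hsum0 i (Finset.mem_univ i)
  obtain ⟨j, hj⟩ : ∃ j, s (a j) ≠ 0 := by
    by_contra h; push_neg at h
    have h1 := hsumt s hs
    simp [h] at h1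
  have hμj : μ j = 1 := by
    rcases mul_eq_zero.mp (hterm j) with h | h
    · linarith
    · exact absurd h hj
  refine ⟨a j, ha j, ?_⟩
  obtain ⟨t, ht, htj⟩ := hstate (a j) (ha j)
  have htf : t f = 1 := by rw [hkey t ht j htj, hμj]
  have hts : t = s := by
    have hmem : t ∈ {s' : V →ₗ[ℝ] ℝ | IsState P u s' ∧ s' f = 1} := ⟨ht, htf⟩
    rw [hexp] at hmem; exact hmem
  apply Set.eq_singleton_iff_unique_mem.mpr
  refine ⟨⟨hs, hts ▸ htj⟩, ?_⟩
  intro s' hs'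
  have hs'f : s' f = 1 := by rw [hkey s' hs'.1 j hs'.2, hμj]
  have hmem : s' ∈ {s' : V →ₗ[ℝ] ℝ | IsState P u s' ∧ s' f = 1} := ⟨hs'.1, hs'f⟩
  rw [hexp] at hmem; exact hmem
end

section
/- Suppose E is spectral and that every pair of distinct elements a, a' ∈ S₁(E) is summable, i.e. a + a' ≤ u. Then any two contexts of E are equal (E contains only one context). -/
variable {V : Type*} [AddCommGroup V] [Module ℝ V]

/-- A context given as a finite set of sharp one-dimensional elements summing to `u`. -/
def IsContextF (P : Set V) (u : V) (A : Finset V) : Prop :=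
  (∀ a ∈ A, a ∈ S1 P u) ∧ ∑ a ∈ A, a = u

/-- If every pair of distinct sharp one-dimensional elements of a spectral effect
algebra is summable, then there is only one context. -/
theorem stmt_6 (P : Set V) (hP : IsCone P) (u : V) (hu : u ∈ P)
    (hspec : Spectral P u)
    (hstate : ∀ a ∈ S1 P u, ∃ s : V →ₗ[ℝ] ℝ, IsState P u s ∧ s a = 1)
    (hsum : ∀ a ∈ S1 P u, ∀ a' ∈ S1 P u, a ≠ a' → leC P (a + a') u) :
    ∀ A B : Finset V, IsContextF P u A → IsContextF P u B → A = B := by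
  have key : ∀ A B : Finset V, IsContextF P u A → IsContextF P u B → A ⊆ B := by
    intro A B hA hB a haA
    by_contra haB
    obtain ⟨s, ⟨hsP, hsu⟩, hsa⟩ := hstate a (hA.1 a haA)
    have hb0 : ∀ b ∈ B, s b = 0 := by
      intro b hbB
      have hne : a ≠ b := fun h => haB (h ▸ hbB)
      have hle := hsum a (hA.1 a haA) b (hB.1 b hbB) hne
      have h1 : 0 ≤ s (u - (a + b)) := hsP _ hle
      have h2 : 0 ≤ s b := by
        have hb : b - 0 ∈ P := (hB.1 b hbB).1.1.1
        simpa using hsP _ hb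
      have h3 : s (u - (a + b)) = 1 - 1 - s b := by
        simp [map_sub, map_add, hsu, hsa]
      linarith
    have hzero : s u = 0 := by
      rw [← hB.2, map_sum]
      exact Finset.sum_eq_zero hb0
    rw [hsu] at hzero
    norm_num at hzero
  intro A B hA hB
  exact le_antisymm (key A B hA hB) (key B A hB hA)
end

section
/- A finite family of elements of the direct product effect algebra E₁ × E₂ = [0,(u₁,u₂)] is a context if and only if it is of the form {(a₁,0), …, (aₙ,0), (0,b₁), …, (0,bₘ)} where {a₁,…,aₙ} is a context of E₁ and {b₁,…,bₘ} is a context of E₂. -/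
variable {V : Type*} [AddCommGroup V] [Module ℝ V]

/-!
A one-dimensional element `f` of `E₁ × E₂` lies above `(f.1, 0)`, so `(f.1, 0)` is a multiple
of `f` and one coordinate of `f` vanishes. Below `(x, 0)` the product looks exactly like `E₁`
below `x`, since pointedness of `P₂` squeezes the second coordinate to `0`; hence `(x, 0)` is
sharp and one-dimensional in the product iff `x` is so in `E₁`, and symmetrically through the
swap `V₂ × V₁ ≃ V₁ × V₂`. A context of the product is therefore a family of elements `(x, 0)`
and `(0, y)`; sorting it by the vanishing coordinate and summing componentwise gives the claim.
-/

lemma Fin.sum_append_apply_equiv {M : Type*} [AddCommMonoid M] {n m N : ℕ} (u : Fin n → M)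
    (v : Fin m → M) (e : Fin N ≃ Fin (n + m)) :
    ∑ i, Fin.append u v (e i) = ∑ j, u j + ∑ j, v j := by
  rw [e.sum_comp (Fin.append u v), Fin.sum_univ_add]
  simp only [Fin.append_left, Fin.append_right]

lemma Fin.forall_mem_image_union_iff_exists_append {α β γ : Type*} {g : β → α} {h : γ → α}
    {s : Set β} {t : Set γ} {N : ℕ} {c : Fin N → α} :
    (∀ i, c i ∈ g '' s ∪ h '' t) ↔
      ∃ (n m : ℕ) (a : Fin n → β) (b : Fin m → γ) (e : Fin N ≃ Fin (n + m)),
        (∀ j, a j ∈ s) ∧ (∀ j, b j ∈ t) ∧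
          ∀ i, c i = Fin.append (fun j => g (a j)) (fun j => h (b j)) (e i) := by
  classical
  constructor
  · intro hc
    let p : Fin N → Prop := fun i => c i ∈ g '' s
    choose x hxs hx using fun i : {i // p i} => i.2
    choose y hyt hy using fun i : {i // ¬ p i} => (hc i).resolve_left i.2
    let e₁ := Fintype.equivFin {i // p i}
    let e₂ := Fintype.equivFin {i // ¬ p i}
    refine ⟨_, _, x ∘ e₁.symm, y ∘ e₂.symm,
      (Equiv.sumCompl p).symm.trans ((e₁.sumCongr e₂).trans finSumFinEquiv),
      fun j => hxs _, fun j => hyt _, fun i => ?_⟩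
    by_cases hi : p i
    · simp [Equiv.sumCompl_symm_apply_of_pos hi, hx]
    · simp [Equiv.sumCompl_symm_apply_of_neg hi, hy]
  · rintro ⟨n, m, a, b, e, ha, hb, hc⟩ i
    rw [hc i]
    refine Fin.addCases (fun j => ?_) (fun j => ?_) (e i)
    · exact Or.inl ⟨a j, ha j, by simp⟩
    · exact Or.inr ⟨b j, hb j, by simp⟩

section Transport

variable {W : Type*} [AddCommGroup W] [Module ℝ W] {P : Set V} {Q : Set W}

lemma leC_map_iff (e : V ≃ₗ[ℝ] W) (hPQ : ∀ x, e x ∈ Q ↔ x ∈ P) {v w : V} :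
    leC Q (e v) (e w) ↔ leC P v w := by
  rw [leC, ← map_sub, hPQ, leC]

lemma map_mem_Eff_iff (e : V ≃ₗ[ℝ] W) (hPQ : ∀ x, e x ∈ Q ↔ x ∈ P) {u v : V} :
    e v ∈ Eff Q (e u) ↔ v ∈ Eff P u := by
  simp only [Eff, Set.mem_ofPred_eq, ← map_zero e, leC_map_iff e hPQ]

lemma map_mem_S1_iff (e : V ≃ₗ[ℝ] W) (hPQ : ∀ x, e x ∈ Q ↔ x ∈ P) {u f : V} :
    e f ∈ S1 Q (e u) ↔ f ∈ S1 P u := by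
  simp only [S1, Sharp, OneDim, Set.mem_ofPred_eq, e.surjective.forall, map_mem_Eff_iff e hPQ,
    ← map_sub, leC_map_iff e hPQ, ← map_smul, ne_eq, e.map_eq_zero_iff, e.injective.eq_iff]

end Transport

lemma IsCone.zero_mem {P : Set V} (h : IsCone P) {x : V} (hx : x ∈ P) : (0 : V) ∈ P := by
  simpa using h.2.1 0 le_rfl x hx

lemma IsCone.zero_mem_Eff {P : Set V} (h : IsCone P) {u : V} (hu : u ∈ P) : (0 : V) ∈ Eff P u :=
  ⟨by simpa [leC] using h.zero_mem hu, by simpa [leC] using hu⟩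

lemma IsCone.mem_of_mem_Eff {P : Set V} (h : IsCone P) {u v : V} (hv : v ∈ Eff P u) : u ∈ P := by
  simpa [leC] using h.1 _ hv.1 _ hv.2

lemma IsCone.eq_zero_of_leC_zero {P : Set V} (h : IsCone P) {u g : V} (hg : g ∈ Eff P u)
    (hg0 : leC P g 0) : g = 0 :=
  h.2.2 g (by simpa [leC] using hg.1) (by simpa [leC] using hg0)

section Prod

variable {V₁ V₂ : Type*} [AddCommGroup V₁] [AddCommGroup V₂]
  {P₁ : Set V₁} {P₂ : Set V₂} {u₁ : V₁} {u₂ : V₂}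

lemma leC_prod_iff {v w : V₁ × V₂} :
    leC (P₁ ×ˢ P₂) v w ↔ leC P₁ v.1 w.1 ∧ leC P₂ v.2 w.2 :=
  Iff.rfl

lemma mem_Eff_prod_iff {v : V₁ × V₂} :
    v ∈ Eff (P₁ ×ˢ P₂) (u₁, u₂) ↔ v.1 ∈ Eff P₁ u₁ ∧ v.2 ∈ Eff P₂ u₂ := by
  simp only [Eff, Set.mem_ofPred_eq, leC_prod_iff]
  tauto

lemma sum_append_mk_zero_zero_mk {n m N : ℕ} (a : Fin n → V₁) (b : Fin m → V₂)
    (e : Fin N ≃ Fin (n + m)) :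
    ∑ i, Fin.append (fun j => (a j, (0 : V₂))) (fun j => ((0 : V₁), b j)) (e i) =
      (∑ j, a j, ∑ j, b j) := by
  rw [Fin.sum_append_apply_equiv]
  ext <;> simp [Prod.fst_sum, Prod.snd_sum]

variable [Module ℝ V₂]

lemma forall_le_mk_zero_iff (h₂ : IsCone P₂) (hu₂ : u₂ ∈ P₂) {x : V₁} {Φ : V₁ × V₂ → Prop} :
    (∀ g ∈ Eff (P₁ ×ˢ P₂) (u₁, u₂), leC (P₁ ×ˢ P₂) g (x, 0) → Φ g) ↔
      ∀ g ∈ Eff P₁ u₁, leC P₁ g x → Φ (g, 0) := by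
  constructor
  · intro hΦ g hg hgx
    refine hΦ (g, 0) (mem_Eff_prod_iff.2 ⟨hg, h₂.zero_mem_Eff hu₂⟩) ⟨hgx, ?_⟩
    simpa [leC] using h₂.zero_mem hu₂
  · rintro hΦ ⟨g₁, g₂⟩ hg ⟨hg₁x, hg₂0⟩
    obtain rfl : g₂ = 0 := h₂.eq_zero_of_leC_zero (mem_Eff_prod_iff.1 hg).2 hg₂0
    exact hΦ g₁ (mem_Eff_prod_iff.1 hg).1 hg₁x

variable [Module ℝ V₁]

lemma mk_zero_mem_S1_prod_iff (h₂ : IsCone P₂) (hu₂ : u₂ ∈ P₂) {x : V₁} :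
    (x, (0 : V₂)) ∈ S1 (P₁ ×ˢ P₂) (u₁, u₂) ↔ x ∈ S1 P₁ u₁ := by
  have hx : (x, (0 : V₂)) ∈ Eff (P₁ ×ˢ P₂) (u₁, u₂) ↔ x ∈ Eff P₁ u₁ := by
    simp [mem_Eff_prod_iff, h₂.zero_mem_Eff hu₂]
  simp only [S1, Sharp, OneDim, Set.mem_ofPred_eq, hx, forall_le_mk_zero_iff h₂ hu₂]
  simp [Prod.ext_iff, leC, hu₂]

lemma zero_mk_mem_S1_prod_iff (h₁ : IsCone P₁) (hu₁ : u₁ ∈ P₁) {y : V₂} :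
    ((0 : V₁), y) ∈ S1 (P₁ ×ˢ P₂) (u₁, u₂) ↔ y ∈ S1 P₂ u₂ := by
  have hswap : ∀ v : V₂ × V₁, LinearEquiv.prodComm ℝ V₂ V₁ v ∈ P₁ ×ˢ P₂ ↔ v ∈ P₂ ×ˢ P₁ :=
    fun v => and_comm
  exact (map_mem_S1_iff _ hswap).trans (mk_zero_mem_S1_prod_iff h₁ hu₁)

lemma OneDim.fst_eq_zero_or_snd_eq_zero (h₁ : IsCone P₁) (h₂ : IsCone P₂) {f : V₁ × V₂}
    (hf : OneDim (P₁ ×ˢ P₂) (u₁, u₂) f) : f.1 = 0 ∨ f.2 = 0 := by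
  obtain ⟨hfE, -, hf⟩ := hf
  obtain ⟨hf₁, hf₂⟩ := mem_Eff_prod_iff.1 hfE
  have hfst : (f.1, (0 : V₂)) ∈ Eff (P₁ ×ˢ P₂) (u₁, u₂) :=
    mem_Eff_prod_iff.2 ⟨hf₁, h₂.zero_mem_Eff (h₂.mem_of_mem_Eff hf₂)⟩
  have hle : leC (P₁ ×ˢ P₂) (f.1, 0) f :=
    ⟨by simpa [leC] using h₁.zero_mem hf₁.1, by simpa [leC] using hf₂.1⟩
  obtain ⟨t, -, -, ht⟩ := hf _ hfst hle
  obtain ⟨ht₁, ht₂⟩ := Prod.ext_iff.1 ht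
  rcases eq_or_ne t 0 with rfl | ht0
  · exact Or.inl (by simpa using ht₁)
  · exact Or.inr (smul_eq_zero.1 ht₂.symm |>.resolve_left ht0)

theorem S1_prod (h₁ : IsCone P₁) (h₂ : IsCone P₂) (hu₁ : u₁ ∈ P₁) (hu₂ : u₂ ∈ P₂) :
    S1 (P₁ ×ˢ P₂) (u₁, u₂) = (fun x => (x, 0)) '' S1 P₁ u₁ ∪ (fun y => (0, y)) '' S1 P₂ u₂ := by
  ext ⟨x, y⟩
  simp only [Set.mem_union, Set.mem_image, Prod.mk.injEq]
  constructor
  · intro hf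
    rcases hf.2.fst_eq_zero_or_snd_eq_zero h₁ h₂ with rfl | rfl
    · exact Or.inr ⟨y, (zero_mk_mem_S1_prod_iff h₁ hu₁).1 hf, rfl, rfl⟩
    · exact Or.inl ⟨x, (mk_zero_mem_S1_prod_iff h₂ hu₂).1 hf, rfl, rfl⟩
  · rintro (⟨x, hx, rfl, rfl⟩ | ⟨y, hy, rfl, rfl⟩)
    · exact (mk_zero_mem_S1_prod_iff h₂ hu₂).2 hx
    · exact (zero_mk_mem_S1_prod_iff h₁ hu₁).2 hy

end Prod

/-- A finite family in the direct product effect algebra is a context iff, up to a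
bijection of the index set, it is of the form
`{(a₁,0), …, (aₙ,0), (0,b₁), …, (0,bₘ)}` for contexts `(aᵢ)` of `E₁` and `(bⱼ)` of `E₂`. -/
theorem stmt_10 {V₁ V₂ : Type*} [AddCommGroup V₁] [Module ℝ V₁]
    [AddCommGroup V₂] [Module ℝ V₂]
    (P₁ : Set V₁) (P₂ : Set V₂) (h₁ : IsCone P₁) (h₂ : IsCone P₂)
    (u₁ : V₁) (u₂ : V₂) (hu₁ : u₁ ∈ P₁) (hu₂ : u₂ ∈ P₂)
    (N : ℕ) (c : Fin N → V₁ × V₂) :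
    IsContext (P₁ ×ˢ P₂) (u₁, u₂) c ↔
      ∃ (n m : ℕ) (a : Fin n → V₁) (b : Fin m → V₂) (e : Fin N ≃ Fin (n + m)),
        IsContext P₁ u₁ a ∧ IsContext P₂ u₂ b ∧
        ∀ i, c i = Fin.append (fun j => (a j, (0 : V₂))) (fun j => ((0 : V₁), b j)) (e i) := by
  simp only [IsContext, S1_prod h₁ h₂ hu₁ hu₂]
  constructor
  · rintro ⟨hS, hsum⟩
    obtain ⟨n, m, a, b, e, ha, hb, hc⟩ := Fin.forall_mem_image_union_iff_exists_append.1 hS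
    rw [Fintype.sum_congr _ _ hc, sum_append_mk_zero_zero_mk, Prod.mk.injEq] at hsum
    exact ⟨n, m, a, b, e, ⟨ha, hsum.1⟩, ⟨hb, hsum.2⟩, hc⟩
  · rintro ⟨n, m, a, b, e, ⟨ha, hasum⟩, ⟨hb, hbsum⟩, hc⟩
    refine ⟨Fin.forall_mem_image_union_iff_exists_append.2 ⟨n, m, a, b, e, ha, hb, hc⟩, ?_⟩
    rw [Fintype.sum_congr _ _ hc, sum_append_mk_zero_zero_mk, hasum, hbsum]
end

section
/- If E₁ and E₂ are spectral effect algebras, then their direct product E₁ × E₂ = [0,(u₁,u₂)] is a spectral effect algebra. -/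
variable {V : Type*} [AddCommGroup V] [Module ℝ V]

lemma S1_prod_left {V₁ V₂ : Type*} [AddCommGroup V₁] [Module ℝ V₁]
    [AddCommGroup V₂] [Module ℝ V₂]
    {P₁ : Set V₁} {P₂ : Set V₂} (h₂ : IsCone P₂)
    {u₁ : V₁} {u₂ : V₂} (hu₂ : u₂ ∈ P₂) (h0₂ : (0:V₂) ∈ P₂)
    {a : V₁} (ha : a ∈ S1 P₁ u₁) : ((a, 0) : V₁ × V₂) ∈ S1 (P₁ ×ˢ P₂) (u₁, u₂) := by
  obtain ⟨⟨haE, hash⟩, _, hane, haod⟩ := ha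
  have haP : a ∈ P₁ := by simpa [leC] using haE.1
  have haU : u₁ - a ∈ P₁ := haE.2
  have hE : ((a, 0) : V₁ × V₂) ∈ Eff (P₁ ×ˢ P₂) (u₁, u₂) := by
    constructor
    · simpa [leC, Set.mem_prod] using ⟨haP, h0₂⟩
    · simpa [leC, Set.mem_prod, Prod.sub_def] using ⟨haU, hu₂⟩
  have key : ∀ g ∈ Eff (P₁ ×ˢ P₂) (u₁, u₂), leC (P₁ ×ˢ P₂) g (a, 0) →
      g.2 = 0 ∧ g.1 ∈ Eff P₁ u₁ ∧ leC P₁ g.1 a := by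
    intro g hg hga
    have hg1 : g.1 ∈ P₁ ∧ g.2 ∈ P₂ := by simpa [leC, Set.mem_prod] using hg.1
    have hg2 : u₁ - g.1 ∈ P₁ ∧ u₂ - g.2 ∈ P₂ := by
      simpa [leC, Set.mem_prod, Prod.sub_def] using hg.2
    have hga' : a - g.1 ∈ P₁ ∧ -g.2 ∈ P₂ := by
      simpa [leC, Set.mem_prod, Prod.sub_def] using hga
    have hg20 : g.2 = 0 := h₂.2.2 g.2 hg1.2 hga'.2
    exact ⟨hg20, ⟨by simpa [leC] using hg1.1, hg2.1⟩, hga'.1⟩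
  refine ⟨⟨hE, ?_⟩, hE, ?_, ?_⟩
  · intro g hg hga hgc
    obtain ⟨hg20, hg1E, hg1a⟩ := key g hg hga
    have hgc' : (u₁ - a) - g.1 ∈ P₁ := by
      have := hgc
      simp only [leC, Set.mem_prod, Prod.sub_def] at this
      exact this.1
    have : g.1 = 0 := hash g.1 hg1E hg1a hgc'
    exact Prod.ext this hg20
  · simpa using hane
  · intro g hg hga
    obtain ⟨hg20, hg1E, hg1a⟩ := key g hg hga
    obtain ⟨t, ht0, ht1, htg⟩ := haod g.1 hg1E hg1a
    exact ⟨t, ht0, ht1, by rw [Prod.smul_def]; exact Prod.ext htg (by simp [hg20])⟩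

lemma S1_prod_right {V₁ V₂ : Type*} [AddCommGroup V₁] [Module ℝ V₁]
    [AddCommGroup V₂] [Module ℝ V₂]
    {P₁ : Set V₁} {P₂ : Set V₂} (h₁ : IsCone P₁)
    {u₁ : V₁} {u₂ : V₂} (hu₁ : u₁ ∈ P₁) (h0₁ : (0:V₁) ∈ P₁)
    {b : V₂} (hb : b ∈ S1 P₂ u₂) : ((0, b) : V₁ × V₂) ∈ S1 (P₁ ×ˢ P₂) (u₁, u₂) := by
  obtain ⟨⟨hbE, hbsh⟩, _, hbne, hbod⟩ := hb
  have hbP : b ∈ P₂ := by simpa [leC] using hbE.1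
  have hbU : u₂ - b ∈ P₂ := hbE.2
  have hE : ((0, b) : V₁ × V₂) ∈ Eff (P₁ ×ˢ P₂) (u₁, u₂) := by
    constructor
    · simpa [leC, Set.mem_prod] using ⟨h0₁, hbP⟩
    · simpa [leC, Set.mem_prod, Prod.sub_def] using ⟨hu₁, hbU⟩
  have key : ∀ g ∈ Eff (P₁ ×ˢ P₂) (u₁, u₂), leC (P₁ ×ˢ P₂) g (0, b) →
      g.1 = 0 ∧ g.2 ∈ Eff P₂ u₂ ∧ leC P₂ g.2 b := by
    intro g hg hga
    have hg1 : g.1 ∈ P₁ ∧ g.2 ∈ P₂ := by simpa [leC, Set.mem_prod] using hg.1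
    have hg2 : u₁ - g.1 ∈ P₁ ∧ u₂ - g.2 ∈ P₂ := by
      simpa [leC, Set.mem_prod, Prod.sub_def] using hg.2
    have hga' : -g.1 ∈ P₁ ∧ b - g.2 ∈ P₂ := by
      simpa [leC, Set.mem_prod, Prod.sub_def] using hga
    have hg10 : g.1 = 0 := h₁.2.2 g.1 hg1.1 hga'.1
    exact ⟨hg10, ⟨by simpa [leC] using hg1.2, hg2.2⟩, hga'.2⟩
  refine ⟨⟨hE, ?_⟩, hE, ?_, ?_⟩
  · intro g hg hga hgc
    obtain ⟨hg10, hg2E, hg2b⟩ := key g hg hga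
    have hgc' : (u₂ - b) - g.2 ∈ P₂ := by
      have := hgc
      simp only [leC, Set.mem_prod, Prod.sub_def] at this
      exact this.2
    have : g.2 = 0 := hbsh g.2 hg2E hg2b hgc'
    exact Prod.ext hg10 this
  · simpa using hbne
  · intro g hg hga
    obtain ⟨hg10, hg2E, hg2b⟩ := key g hg hga
    obtain ⟨t, ht0, ht1, htg⟩ := hbod g.2 hg2E hg2b
    exact ⟨t, ht0, ht1, by rw [Prod.smul_def]; exact Prod.ext (by simp [hg10]) htg⟩

/-- The direct product of spectral effect algebras is a spectral effect algebra. -/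
theorem stmt_11 {V₁ V₂ : Type*} [AddCommGroup V₁] [Module ℝ V₁]
    [AddCommGroup V₂] [Module ℝ V₂]
    (P₁ : Set V₁) (P₂ : Set V₂) (h₁ : IsCone P₁) (h₂ : IsCone P₂)
    (u₁ : V₁) (u₂ : V₂) (hu₁ : u₁ ∈ P₁) (hu₂ : u₂ ∈ P₂)
    (hspec₁ : Spectral P₁ u₁) (hspec₂ : Spectral P₂ u₂) :
    Spectral (P₁ ×ˢ P₂) (u₁, u₂) := by
  have h0₁ : (0:V₁) ∈ P₁ := by simpa using h₁.2.1 0 le_rfl u₁ hu₁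
  have h0₂ : (0:V₂) ∈ P₂ := by simpa using h₂.2.1 0 le_rfl u₂ hu₂
  intro f hf
  have hf1 : f.1 ∈ Eff P₁ u₁ := by
    refine ⟨?_, ?_⟩
    · have := hf.1; simp only [leC, Set.mem_prod, Prod.sub_def] at this ⊢
      simpa using this.1
    · have := hf.2; simp only [leC, Set.mem_prod, Prod.sub_def] at this ⊢
      exact this.1
  have hf2 : f.2 ∈ Eff P₂ u₂ := by
    refine ⟨?_, ?_⟩
    · have := hf.1; simp only [leC, Set.mem_prod, Prod.sub_def] at this ⊢
      simpa using this.2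
    · have := hf.2; simp only [leC, Set.mem_prod, Prod.sub_def] at this ⊢
      exact this.2
  obtain ⟨n, a, μ, ⟨haS, haSum⟩, hμ, hfa⟩ := hspec₁ f.1 hf1
  obtain ⟨m, b, ν, ⟨hbS, hbSum⟩, hν, hfb⟩ := hspec₂ f.2 hf2
  refine ⟨n + m, Fin.append (fun i => ((a i, 0) : V₁ × V₂)) (fun j => ((0, b j) : V₁ × V₂)),
    Fin.append μ ν, ⟨?_, ?_⟩, ?_, ?_⟩
  · intro i
    rcases lt_or_ge (i : ℕ) n with hi | hi
    · have : i = Fin.castAdd m ⟨i, hi⟩ := by ext; simp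
      rw [this, Fin.append_left]
      exact S1_prod_left h₂ hu₂ h0₂ (haS _)
    · obtain ⟨j, rfl⟩ : ∃ j : Fin m, i = Fin.natAdd n j :=
        ⟨⟨i - n, by omega⟩, by ext; simp; omega⟩
      rw [Fin.append_right]
      exact S1_prod_right h₁ hu₁ h0₁ (hbS _)
  · rw [Fin.sum_univ_add]
    simp only [Fin.append_left, Fin.append_right]
    apply Prod.ext <;>
      simp [Prod.fst_sum, Prod.snd_sum, haSum, hbSum]
  · intro i
    rcases lt_or_ge (i : ℕ) n with hi | hi
    · have : i = Fin.castAdd m ⟨i, hi⟩ := by ext; simp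
      rw [this, Fin.append_left]; exact hμ _
    · obtain ⟨j, rfl⟩ : ∃ j : Fin m, i = Fin.natAdd n j :=
        ⟨⟨i - n, by omega⟩, by ext; simp; omega⟩
      rw [Fin.append_right]; exact hν _
  · rw [Fin.sum_univ_add]
    simp only [Fin.append_left, Fin.append_right]
    apply Prod.ext <;>
      simp [Prod.fst_sum, Prod.snd_sum, Prod.smul_def, ← hfa, ← hfb]
end

section
/- Let W = (V₁ × V₂)/span{(u₁,−u₂)} be the quotient vector space and let C ⊆ W be the image of C₁ × C₂ under the quotient map. Then C is a pointed convex cone: C ∩ (−C) = {0}. -/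
/-!
A linear image of a pointed cone `P` stays pointed when the kernel meets `P` only in `0`: if
`f p = -f q` with `p, q ∈ P`, then `p + q ∈ P ∩ ker f`, so `p = -q ∈ -P`. For the quotient map the
kernel is the line through `(u₁, -u₂)`, and `t • (u₁, -u₂) ∈ C₁ × C₂` puts `t • u₁` into `C₁` and
`(-t) • u₂` into `C₂`. Whatever the sign of `t`, one of these lies in a cone together with its
negative, hence vanishes, and `u₁, u₂ ≠ 0` forces `t = 0`.
-/

variable {V : Type*} [AddCommGroup V] [Module ℝ V]

namespace IsCone

variable {P : Set V}

theorem zero_mem_s12 (hP : IsCone P) {u : V} (hu : u ∈ P) : (0 : V) ∈ P := by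
  simpa using hP.2.1 0 le_rfl u hu

theorem inter_neg_eq_singleton_zero (hP : IsCone P) (h0 : (0 : V) ∈ P) : P ∩ -P = {0} := by
  ext x
  simp only [Set.mem_inter_iff, Set.mem_neg, Set.mem_singleton_iff]
  refine ⟨fun ⟨hx, hnx⟩ ↦ hP.2.2 x hx hnx, ?_⟩
  rintro rfl
  simpa using h0

theorem smul_eq_zero_of_nonpos (hP : IsCone P) {u : V} (hu : u ∈ P) {t : ℝ} (ht : t ≤ 0)
    (htu : t • u ∈ P) : t • u = 0 :=
  hP.2.2 _ htu (by simpa [neg_smul] using hP.2.1 (-t) (neg_nonneg.mpr ht) u hu)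

theorem prod {V₁ V₂ : Type*} [AddCommGroup V₁] [Module ℝ V₁] [AddCommGroup V₂] [Module ℝ V₂]
    {C₁ : Set V₁} {C₂ : Set V₂} (h₁ : IsCone C₁) (h₂ : IsCone C₂) : IsCone (C₁ ×ˢ C₂) := by
  refine ⟨fun x hx y hy ↦ ⟨h₁.1 _ hx.1 _ hy.1, h₂.1 _ hx.2 _ hy.2⟩,
    fun c hc x hx ↦ ⟨h₁.2.1 c hc _ hx.1, h₂.2.1 c hc _ hx.2⟩, fun x hx hnx ↦ ?_⟩
  exact Prod.ext (h₁.2.2 _ hx.1 hnx.1) (h₂.2.2 _ hx.2 hnx.2)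

theorem image {W : Type*} [AddCommGroup W] [Module ℝ W] (hP : IsCone P) (f : V →ₗ[ℝ] W)
    (hker : ∀ p ∈ P, f p = 0 → p = 0) : IsCone (f '' P) := by
  refine ⟨?_, ?_, ?_⟩
  · rintro _ ⟨p, hp, rfl⟩ _ ⟨q, hq, rfl⟩
    exact ⟨p + q, hP.1 p hp q hq, map_add f p q⟩
  · rintro c hc _ ⟨p, hp, rfl⟩
    exact ⟨c • p, hP.2.1 c hc p hp, map_smul f c p⟩
  · rintro _ ⟨p, hp, rfl⟩ ⟨q, hq, hfq⟩
    have hpq : p + q = 0 :=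
      hker _ (hP.1 p hp q hq) (by rw [map_add, hfq, add_neg_cancel])
    rw [hP.2.2 p hp (by rwa [← eq_neg_of_add_eq_zero_right hpq]), map_zero]

end IsCone

theorem eq_zero_of_mem_prod_of_mem_span {V₁ V₂ : Type*} [AddCommGroup V₁] [Module ℝ V₁]
    [AddCommGroup V₂] [Module ℝ V₂] {C₁ : Set V₁} {C₂ : Set V₂} (h₁ : IsCone C₁)
    (h₂ : IsCone C₂) {u₁ : V₁} {u₂ : V₂} (hu₁ : u₁ ∈ C₁) (hu₂ : u₂ ∈ C₂) (hn₁ : u₁ ≠ 0)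
    (hn₂ : u₂ ≠ 0) {p : V₁ × V₂} (hp : p ∈ C₁ ×ˢ C₂)
    (hspan : p ∈ Submodule.span ℝ {(u₁, -u₂)}) : p = 0 := by
  obtain ⟨t, rfl⟩ := Submodule.mem_span_singleton.mp hspan
  have hp₁ : t • u₁ ∈ C₁ := hp.1
  have hp₂ : (-t) • u₂ ∈ C₂ := by simpa [smul_neg, neg_smul] using hp.2
  suffices t = 0 by simp [this]
  rcases le_total t 0 with ht | ht
  · exact (smul_eq_zero.mp (h₁.smul_eq_zero_of_nonpos hu₁ ht hp₁)).resolve_right hn₁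
  · exact neg_eq_zero.mp
      ((smul_eq_zero.mp (h₂.smul_eq_zero_of_nonpos hu₂ (neg_nonpos.mpr ht) hp₂)).resolve_right hn₂)

/-- The image of the cone `C₁ × C₂` in the quotient space
`(V₁ × V₂) / span{(u₁, -u₂)}` is a pointed convex cone. -/
theorem stmt_12 {V₁ V₂ : Type*} [AddCommGroup V₁] [Module ℝ V₁]
    [AddCommGroup V₂] [Module ℝ V₂]
    (C₁ : Set V₁) (C₂ : Set V₂) (h₁ : IsCone C₁) (h₂ : IsCone C₂)
    (u₁ : V₁) (u₂ : V₂) (hu₁ : u₁ ∈ C₁) (hu₂ : u₂ ∈ C₂)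
    (hn₁ : u₁ ≠ 0) (hn₂ : u₂ ≠ 0)
    (S : Submodule ℝ (V₁ × V₂)) (hS : S = Submodule.span ℝ {(u₁, -u₂)})
    (C : Set ((V₁ × V₂) ⧸ S)) (hC : C = S.mkQ '' (C₁ ×ˢ C₂)) :
    (∀ x ∈ C, ∀ y ∈ C, x + y ∈ C) ∧
    (∀ c : ℝ, 0 ≤ c → ∀ x ∈ C, c • x ∈ C) ∧
    C ∩ (-C) = {0} := by
  have hprod := h₁.prod h₂
  have hC_cone : IsCone C := by
    subst hC
    refine hprod.image S.mkQ fun p hp hp0 ↦ ?_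
    rw [Submodule.mkQ_apply, Submodule.Quotient.mk_eq_zero, hS] at hp0
    exact eq_zero_of_mem_prod_of_mem_span h₁ h₂ hu₁ hu₂ hn₁ hn₂ hp hp0
  have h0 : (0 : (V₁ × V₂) ⧸ S) ∈ C := by
    rw [hC]
    exact ⟨0, hprod.zero_mem_s12 (Set.mk_mem_prod hu₁ hu₂), map_zero _⟩
  exact ⟨hC_cone.1, hC_cone.2.1, hC_cone.inter_neg_eq_singleton_zero h0⟩
end

section
/- Suppose E is spectral and 𝔖(E) is sharply determining. Let a ∈ E have a spectral decomposition a = Σᵢ μᵢaᵢ with context (aᵢ), and set a⁰ = Σ_{i : μᵢ > 0} aᵢ. Then a⁰ is sharp, a ≤ a⁰, and a⁰ ≤ b for every sharp b ∈ E with a ≤ b; i.e., a⁰ is the smallest sharp element larger than a. -/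
variable {V : Type*} [AddCommGroup V] [Module ℝ V]

/-- The state space is sharply determining: for every sharp `f` and every `g ∈ E`
with `¬(f ≤ g)` there is a state `s` with `s f = 1 > s g`. -/
def SharplyDet (P : Set V) (u : V) : Prop :=
  ∀ f ∈ Eff P u, Sharp P u f → ∀ g ∈ Eff P u, ¬ leC P f g →
    ∃ s : V →ₗ[ℝ] ℝ, IsState P u s ∧ s f = 1 ∧ s g < 1

section Aux

variable {P : Set V} {u : V}

lemma zeroP (hP : IsCone P) (hu : u ∈ P) : (0 : V) ∈ P := by
  have := hP.2.1 0 le_rfl u hu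
  simpa using this

lemma memP_of_leC0 {v : V} (h : leC P 0 v) : v ∈ P := by simpa [leC] using h

lemma sum_memP (hP : IsCone P) (hu : u ∈ P) {ι : Type*} (F : Finset ι) (x : ι → V)
    (hx : ∀ i ∈ F, x i ∈ P) : ∑ i ∈ F, x i ∈ P :=
  Finset.sum_induction x (· ∈ P) (fun a b ha hb => hP.1 a ha b hb) (zeroP hP hu) hx

lemma Eff_compl {g : V} (hg : g ∈ Eff P u) : u - g ∈ Eff P u := by
  refine ⟨?_, ?_⟩
  · have := hg.2; simpa [leC] using this
  · have := hg.1; simpa [leC] using this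

lemma Sharp_compl {g : V} (hg : Sharp P u g) : Sharp P u (u - g) := by
  refine ⟨Eff_compl hg.1, fun c hc h1 h2 => ?_⟩
  have h2' : leC P c g := by simpa [leC] using h2
  exact hg.2 c hc h2' h1

lemma state_mono {s : V →ₗ[ℝ] ℝ} (hs : IsState P u s) {v w : V} (h : leC P v w) :
    s v ≤ s w := by
  have := hs.1 _ h
  rw [map_sub] at this
  linarith

lemma master (hsd : SharplyDet P u) {p g : V} (hpE : p ∈ Eff P u) (hps : Sharp P u p)
    (hg : g ∈ Eff P u) (h : ∀ s : V →ₗ[ℝ] ℝ, IsState P u s → s p = 1 → 1 ≤ s g) :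
    leC P p g := by
  by_contra hc
  obtain ⟨s, hs, hp1, hg1⟩ := hsd p hpE hps g hg hc
  exact absurd (h s hs hp1) (not_le.mpr hg1)

lemma scal (hsd : SharplyDet P u) {a g : V} {t : ℝ} (ht : 0 < t)
    (haE : a ∈ Eff P u) (has : Sharp P u a) (hg : g ∈ Eff P u)
    (h : leC P (t • g) (u - a)) : leC P g (u - a) := by
  have key : leC P a (u - g) := by
    refine master hsd haE has (Eff_compl hg) (fun s hs hs1 => ?_)
    have h0 : 0 ≤ s ((u - a) - t • g) := hs.1 _ h
    rw [map_sub, map_sub, map_smul, hs.2, hs1, smul_eq_mul] at h0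
    have hsg : s g ≤ 0 := by nlinarith
    rw [map_sub, hs.2]
    linarith
  show (u - a) - g ∈ P
  have heq : (u - a) - g = (u - g) - a := by abel
  rw [heq]
  exact key

end Aux

open scoped Classical in
/-- In a spectral effect algebra with sharply determining state space, for a
spectral decomposition `f = ∑ μᵢ aᵢ` the element `f⁰ = ∑_{μᵢ > 0} aᵢ` is the
smallest sharp element above `f`. -/
theorem stmt_15 (P : Set V) (hP : IsCone P) (u : V) (hu : u ∈ P)
    (hspec : Spectral P u) (hsd : SharplyDet P u)
    (f : V) (hf : f ∈ Eff P u) (n : ℕ) (a : Fin n → V) (μ : Fin n → ℝ)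
    (ha : IsContext P u a) (hμ : ∀ i, 0 ≤ μ i ∧ μ i ≤ 1)
    (hdec : f = ∑ i, μ i • a i) :
    Sharp P u (∑ i ∈ Finset.univ.filter (fun i => 0 < μ i), a i) ∧
    leC P f (∑ i ∈ Finset.univ.filter (fun i => 0 < μ i), a i) ∧
    ∀ b ∈ Eff P u, Sharp P u b → leC P f b →
      leC P (∑ i ∈ Finset.univ.filter (fun i => 0 < μ i), a i) b := by
  classical
  set S : Finset (Fin n) := Finset.univ.filter (fun i => 0 < μ i) with hSdef
  set f0 : V := ∑ i ∈ S, a i with hf0def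
  -- basic facts about the context
  have haP : ∀ i, a i ∈ P := fun i => memP_of_leC0 ((ha.1 i).1.1.1)
  have haE : ∀ i, a i ∈ Eff P u := fun i => (ha.1 i).1.1
  have haSharp : ∀ i, Sharp P u (a i) := fun i => (ha.1 i).1
  -- partial sums of the context are effects
  have hps : ∀ F : Finset (Fin n), (∑ i ∈ F, a i) ∈ Eff P u := by
    intro F
    constructor
    · show (∑ i ∈ F, a i) - 0 ∈ P
      rw [sub_zero]
      exact sum_memP hP hu F a (fun i _ => haP i)
    · show u - ∑ i ∈ F, a i ∈ P
      have heq : u - ∑ i ∈ F, a i = ∑ i ∈ Finset.univ \ F, a i := by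
        rw [← ha.2, ← Finset.sum_sdiff (Finset.subset_univ F)]
        abel
      rw [heq]
      exact sum_memP hP hu _ a (fun i _ => haP i)
  have hf0E : f0 ∈ Eff P u := hps S
  -- μ vanishes off S
  have hμz : ∀ i, i ∉ S → μ i = 0 := by
    intro i hi
    have : ¬ 0 < μ i := by
      intro h
      exact hi (by simp [hSdef, h])
    exact le_antisymm (not_lt.mp this) (hμ i).1
  have hfS : f = ∑ i ∈ S, μ i • a i := by
    rw [hdec, ← Finset.sum_filter_add_sum_filter_not Finset.univ (fun i => 0 < μ i)
      (fun i => μ i • a i)]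
    have hz : ∑ i ∈ Finset.univ.filter (fun i => ¬ 0 < μ i), μ i • a i = 0 := by
      refine Finset.sum_eq_zero (fun i hi => ?_)
      have hiS : i ∉ S := by
        simp only [hSdef, Finset.mem_filter, Finset.mem_univ, true_and]
        exact (Finset.mem_filter.mp hi).2
      rw [hμz i hiS, zero_smul]
    rw [hz, add_zero]
  -- Part 2 : f ≤ f0
  have hle : leC P f f0 := by
    show f0 - f ∈ P
    have heq : f0 - f = ∑ i ∈ S, (1 - μ i) • a i := by
      rw [hfS, hf0def, ← Finset.sum_sub_distrib]
      exact Finset.sum_congr rfl (fun i _ => by rw [sub_smul, one_smul])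
    rw [heq]
    exact sum_memP hP hu _ _ (fun i _ =>
      hP.2.1 (1 - μ i) (by linarith [(hμ i).2]) (a i) (haP i))
  -- Part 1 : f0 is sharp
  have hsharp : Sharp P u f0 := by
    refine ⟨hf0E, fun c hc hc1 hc2 => ?_⟩
    obtain ⟨m, b, ν, hb, hν, hcdec⟩ := hspec c hc
    have hνz : ∀ j, ν j = 0 := by
      intro j
      by_contra hj
      have hjpos : 0 < ν j := lt_of_le_of_ne (hν j).1 (Ne.symm hj)
      -- ν j • b j ≤ c
      have hbjc : leC P (ν j • b j) c := by
        show c - ν j • b j ∈ P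
        have heq : c - ν j • b j = ∑ k ∈ Finset.univ.erase j, ν k • b k := by
          rw [hcdec, ← Finset.add_sum_erase Finset.univ (fun k => ν k • b k)
            (Finset.mem_univ j)]
          abel
        rw [heq]
        exact sum_memP hP hu _ _ (fun k _ =>
          hP.2.1 (ν k) (hν k).1 (b k) (memP_of_leC0 ((hb.1 k).1.1.1)))
      -- b j ≤ u - a i for every i
      have key : ∀ i : Fin n, leC P (b j) (u - a i) := by
        intro i
        refine scal hsd hjpos (haE i) (haSharp i) ((hb.1 j).1.1) ?_
        show (u - a i) - ν j • b j ∈ P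
        by_cases hi : i ∈ S
        · have h1 : (u - f0) - ν j • b j ∈ P := by
            have htr : c - ν j • b j ∈ P := hbjc
            have hc2' : (u - f0) - c ∈ P := hc2
            have := hP.1 _ hc2' _ htr
            have heq : ((u - f0) - c) + (c - ν j • b j) = (u - f0) - ν j • b j := by abel
            rwa [heq] at this
          have h2 : f0 - a i ∈ P := by
            have heq : f0 - a i = ∑ k ∈ S.erase i, a k := by
              rw [hf0def, ← Finset.add_sum_erase S a hi]
              abel
            rw [heq]
            exact sum_memP hP hu _ a (fun k _ => haP k)
          have := hP.1 _ h1 _ h2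
          have heq : ((u - f0) - ν j • b j) + (f0 - a i) = (u - a i) - ν j • b j := by abel
          rwa [heq] at this
        · have h1 : f0 - ν j • b j ∈ P := by
            have hc1' : f0 - c ∈ P := hc1
            have := hP.1 _ hc1' _ hbjc
            have heq : (f0 - c) + (c - ν j • b j) = f0 - ν j • b j := by abel
            rwa [heq] at this
          have h2 : (u - f0) - a i ∈ P := by
            have hiT : i ∈ Finset.univ \ S := Finset.mem_sdiff.mpr ⟨Finset.mem_univ i, hi⟩
            have heq : (u - f0) - a i = ∑ k ∈ (Finset.univ \ S).erase i, a k := by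
              have h3 : u - f0 = ∑ k ∈ Finset.univ \ S, a k := by
                rw [← ha.2, hf0def, ← Finset.sum_sdiff (Finset.subset_univ S)]
                abel
              rw [h3, ← Finset.add_sum_erase _ a hiT]
              abel
            rw [heq]
            exact sum_memP hP hu _ a (fun k _ => haP k)
          have := hP.1 _ h1 _ h2
          have heq : (f0 - ν j • b j) + ((u - f0) - a i) = (u - a i) - ν j • b j := by abel
          rwa [heq] at this
      -- hence b j ≤ 0, contradicting b j ≠ 0
      have h0E : (0 : V) ∈ Eff P u := by
        constructor
        · show (0 : V) - 0 ∈ P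
          simpa using zeroP hP hu
        · show u - 0 ∈ P
          simpa using hu
      have hbj0 : leC P (b j) 0 := by
        refine master hsd ((hb.1 j).1.1) (hb.1 j).1 h0E (fun s hs hs1 => ?_)
        exfalso
        have hai0 : ∀ i, s (a i) = 0 := by
          intro i
          have h1 := state_mono hs (key i)
          rw [map_sub, hs.2, hs1] at h1
          have h2 : 0 ≤ s (a i) := hs.1 _ (haP i)
          linarith
        have : s u = 0 := by
          rw [← ha.2, map_sum]
          exact Finset.sum_eq_zero (fun i _ => hai0 i)
        rw [hs.2] at this
        norm_num at this
      have hbjP : b j ∈ P := memP_of_leC0 ((hb.1 j).1.1.1)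
      have hbjN : -(b j) ∈ P := by
        have : (0 : V) - b j ∈ P := hbj0
        simpa using this
      exact (hb.1 j).2.2.1 (hP.2.2 (b j) hbjP hbjN)
    rw [hcdec]
    exact Finset.sum_eq_zero (fun j _ => by rw [hνz j, zero_smul])
  -- Part 3 : minimality
  refine ⟨hsharp, hle, fun bb hbb hbbS hfbb => ?_⟩
  have hubE : u - bb ∈ Eff P u := Eff_compl hbb
  have hubS : Sharp P u (u - bb) := Sharp_compl hbbS
  -- each a i (i ∈ S) is below bb
  have hab : ∀ i ∈ S, leC P (a i) bb := by
    intro i hi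
    have hipos : 0 < μ i := by
      have := Finset.mem_filter.mp (hSdef ▸ hi)
      exact this.2
    have h1 : leC P (μ i • a i) f := by
      show f - μ i • a i ∈ P
      have heq : f - μ i • a i = ∑ k ∈ S.erase i, μ k • a k := by
        rw [hfS, ← Finset.add_sum_erase S (fun k => μ k • a k) hi]
        abel
      rw [heq]
      exact sum_memP hP hu _ _ (fun k _ => hP.2.1 (μ k) (hμ k).1 (a k) (haP k))
    have h2 : leC P (μ i • a i) (u - (u - bb)) := by
      show (u - (u - bb)) - μ i • a i ∈ P
      have hf' : f - μ i • a i ∈ P := h1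
      have hb' : bb - f ∈ P := hfbb
      have := hP.1 _ hb' _ hf'
      have heq : (bb - f) + (f - μ i • a i) = (u - (u - bb)) - μ i • a i := by abel
      rwa [heq] at this
    have h3 := scal hsd hipos hubE hubS (haE i) h2
    show bb - a i ∈ P
    have heq : bb - a i = (u - (u - bb)) - a i := by abel
    rw [heq]
    exact h3
  -- master lemma : u - bb ≤ u - f0
  have hfin : leC P (u - bb) (u - f0) := by
    refine master hsd hubE hubS (Eff_compl hf0E) (fun s hs hs1 => ?_)
    have hsb : s bb = 0 := by
      rw [map_sub, hs.2] at hs1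
      linarith
    have hai0 : ∀ i ∈ S, s (a i) = 0 := by
      intro i hi
      have h1 := state_mono hs (hab i hi)
      rw [hsb] at h1
      have h2 : 0 ≤ s (a i) := hs.1 _ (haP i)
      linarith
    have hsf0 : s f0 = 0 := by
      rw [hf0def, map_sum]
      exact Finset.sum_eq_zero hai0
    rw [map_sub, hs.2, hsf0]
    norm_num
  show bb - f0 ∈ P
  have heq : bb - f0 = (u - f0) - (u - bb) := by abel
  rw [heq]
  exact hfin
end

section
/- Suppose E is spectral and 𝔖(E) is sharply determining. Then the set S(E) of sharp elements of E, with the order induced from E and the orthocomplement f ↦ u − f, is an orthomodular lattice: (i) S(E) is a lattice with least element 0 and greatest element u; (ii) u − f ∈ S(E) for f ∈ S(E), u − (u − f) = f, and f ≤ g implies u − g ≤ u − f; (iii) f ∧ (u − f) = 0 for all f ∈ S(E); (iv) for f, g ∈ S(E) with f ≤ g one has g = f ∨ (g ∧ (u − f)), where ∨ and ∧ denote the lattice operations of S(E). -/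
variable {V : Type*} [AddCommGroup V] [Module ℝ V]

/-- `p` is the supremum of `x` and `y` in the poset of sharp elements. -/
def IsSupS (P : Set V) (u x y p : V) : Prop :=
  Sharp P u p ∧ leC P x p ∧ leC P y p ∧
    ∀ q, Sharp P u q → leC P x q → leC P y q → leC P p q

/-- `q` is the infimum of `x` and `y` in the poset of sharp elements. -/
def IsInfS (P : Set V) (u x y q : V) : Prop :=
  Sharp P u q ∧ leC P q x ∧ leC P q y ∧
    ∀ r, Sharp P u r → leC P r x → leC P r y → leC P r q

/-!
Order relations are tested on states: because the states are sharply determining, `x ≤ w` for a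
sharp `w` as soon as every state vanishing on `w` vanishes on `x`. Partial sums of a context are
sharp, so by spectrality every effect `x = ∑ μᵢ • aᵢ` has a least sharp element above it, its
support `∑_{μᵢ > 0} aᵢ`. The join of sharp `f` and `g` is the support of `(f + g) / 2`, the meet
follows by De Morgan through `f ↦ u - f`, and orthomodularity holds because the support of
`g - f` lies below `g ∧ (u - f)`.
-/

section

variable {P : Set V} {u : V}

set_option linter.unusedSectionVars false

lemma mem_eff_iff {v : V} : v ∈ Eff P u ↔ v ∈ P ∧ u - v ∈ P := by
  simp [Eff, leC]

lemma zero_mem_of_isCone (hP : IsCone P) {x : V} (hx : x ∈ P) : (0 : V) ∈ P := by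
  simpa using hP.2.1 0 le_rfl x hx

lemma sum_mem_of_isCone (hP : IsCone P) (hu : u ∈ P) {ι : Type*} (s : Finset ι) {x : ι → V}
    (hx : ∀ i ∈ s, x i ∈ P) : ∑ i ∈ s, x i ∈ P :=
  Finset.sum_induction x (· ∈ P) (fun a b ha hb => hP.1 a ha b hb) (zero_mem_of_isCone hP hu) hx

lemma leC_trans (hP : IsCone P) {a b c : V} (hab : leC P a b) (hbc : leC P b c) :
    leC P a c := by
  have := hP.1 _ hbc _ hab
  rwa [sub_add_sub_cancel] at this

lemma leC_antisymm (hP : IsCone P) {a b : V} (hab : leC P a b) (hba : leC P b a) : a = b := by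
  have := hP.2.2 _ hab (by rwa [neg_sub])
  exact (sub_eq_zero.mp this).symm

lemma leC_sub_sub_iff (w : V) {a b : V} : leC P (w - b) (w - a) ↔ leC P a b := by
  simp only [leC, sub_sub_sub_cancel_left]

lemma leC_sum_of_mem (hP : IsCone P) (hu : u ∈ P) {ι : Type*} [DecidableEq ι] {s : Finset ι}
    {x : ι → V} (hx : ∀ i ∈ s, x i ∈ P) {j : ι} (hj : j ∈ s) : leC P (x j) (∑ i ∈ s, x i) := by
  rw [leC, ← Finset.add_sum_erase s x hj, add_sub_cancel_left]
  exact sum_mem_of_isCone hP hu _ fun i hi => hx i (Finset.mem_of_mem_erase hi)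

lemma sub_mem_eff {v : V} (hv : v ∈ Eff P u) : u - v ∈ Eff P u := by
  rw [mem_eff_iff, sub_sub_cancel] at *
  exact hv.symm

lemma Sharp.compl {f : V} (hf : Sharp P u f) : Sharp P u (u - f) := by
  refine ⟨sub_mem_eff hf.1, fun g hg hgf hgf' => hf.2 g hg ?_ hgf⟩
  rwa [sub_sub_cancel] at hgf'

lemma sharp_zero (hP : IsCone P) (hu : u ∈ P) : Sharp P u 0 := by
  refine ⟨mem_eff_iff.2 ⟨zero_mem_of_isCone hP hu, by simpa using hu⟩, fun g hg hg0 _ => ?_⟩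
  exact hP.2.2 g (mem_eff_iff.1 hg).1 (by simpa [leC] using hg0)

lemma IsState.mono {s : V →ₗ[ℝ] ℝ} (hs : IsState P u s) {a b : V} (hab : leC P a b) :
    s a ≤ s b := by
  have := hs.1 _ hab
  rw [map_sub] at this
  linarith

lemma le_of_forall_state_eq_zero (hsd : SharplyDet P u) {w x : V} (hw : Sharp P u w)
    (hx : x ∈ Eff P u) (h : ∀ s, IsState P u s → s w = 0 → s x = 0) : leC P x w := by
  by_contra hxw
  rw [← leC_sub_sub_iff u] at hxw
  obtain ⟨s, hs, hsw, hsx⟩ := hsd _ hw.compl.1 hw.compl _ (sub_mem_eff hx) hxw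
  rw [map_sub, hs.2] at hsw hsx
  linarith [h s hs (by linarith)]

lemma le_of_smul_le (hsd : SharplyDet P u) {b y : V} (hb : b ∈ Eff P u) (hy : Sharp P u y)
    {t : ℝ} (ht : 0 < t) (h : leC P (t • b) y) : leC P b y := by
  refine le_of_forall_state_eq_zero hsd hy hb fun s hs hsy => ?_
  have h1 := hs.mono h
  rw [map_smul, smul_eq_mul, hsy] at h1
  have h2 := hs.1 b (mem_eff_iff.1 hb).1
  nlinarith

lemma exists_state_eq_one (hP : IsCone P) (hu : u ∈ P) (hsd : SharplyDet P u) {b : V}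
    (hb : Sharp P u b) (hne : b ≠ 0) : ∃ s, IsState P u s ∧ s b = 1 := by
  have hb0 : ¬ leC P b 0 := fun h =>
    hne (hP.2.2 b (mem_eff_iff.1 hb.1).1 (by simpa [leC] using h))
  obtain ⟨s, hs, hsb, -⟩ := hsd b hb.1 hb 0 (sharp_zero hP hu).1 hb0
  exact ⟨s, hs, hsb⟩

lemma exists_smul_le_of_ne_zero (hP : IsCone P) (hu : u ∈ P) (hspec : Spectral P u) {g : V}
    (hg : g ∈ Eff P u) (hne : g ≠ 0) : ∃ t : ℝ, 0 < t ∧ ∃ b ∈ S1 P u, leC P (t • b) g := by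
  classical
  obtain ⟨n, b, ν, hb, hν, rfl⟩ := hspec g hg
  obtain ⟨j, hj⟩ : ∃ j, ν j ≠ 0 := by
    by_contra! h
    simp [h] at hne
  refine ⟨ν j, lt_of_le_of_ne (hν j).1 hj.symm, b j, hb.1 j, ?_⟩
  refine leC_sum_of_mem hP hu (fun i _ => hP.2.1 _ (hν i).1 _ ?_) (Finset.mem_univ j)
  exact (mem_eff_iff.1 (hb.1 i).1.1).1

/-- Otherwise an atom of the spectral decomposition of `g` would lie below every `u - c i`, and a
state equal to `1` on that atom would vanish on the whole context. -/
lemma eq_zero_of_forall_le_sub_context (hP : IsCone P) (hu : u ∈ P) (hspec : Spectral P u)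
    (hsd : SharplyDet P u) {n : ℕ} {c : Fin n → V} (hc : IsContext P u c) {g : V}
    (hg : g ∈ Eff P u) (h : ∀ i, leC P g (u - c i)) : g = 0 := by
  by_contra hne
  obtain ⟨t, ht, b, ⟨hb, hbE, hb0, -⟩, htb⟩ := exists_smul_le_of_ne_zero hP hu hspec hg hne
  obtain ⟨s, hs, hsb⟩ := exists_state_eq_one hP hu hsd hb hb0
  have hsc : ∀ i, s (c i) ≤ 0 := fun i => by
    have := hs.mono (le_of_smul_le hsd hbE (hc.1 i).1.compl ht (leC_trans hP htb (h i)))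
    rw [map_sub, hs.2, hsb] at this
    linarith
  have : s u ≤ 0 := by
    rw [← hc.2, map_sum]
    exact Finset.sum_nonpos fun i _ => hsc i
  linarith [hs.2]

lemma sharp_sum_context (hP : IsCone P) (hu : u ∈ P) (hspec : Spectral P u)
    (hsd : SharplyDet P u) {n : ℕ} {c : Fin n → V} (hc : IsContext P u c)
    (A : Finset (Fin n)) : Sharp P u (∑ i ∈ A, c i) := by
  classical
  have hcP : ∀ i, c i ∈ P := fun i => (mem_eff_iff.1 (hc.1 i).1.1).1
  have hcompl : u - ∑ i ∈ A, c i = ∑ i ∈ Aᶜ, c i := by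
    rw [← hc.2, ← Finset.sum_add_sum_compl A c, add_sub_cancel_left]
  refine ⟨mem_eff_iff.2 ⟨sum_mem_of_isCone hP hu _ fun i _ => hcP i, ?_⟩, ?_⟩
  · rw [hcompl]
    exact sum_mem_of_isCone hP hu _ fun i _ => hcP i
  intro g hg hgA hgAc
  refine eq_zero_of_forall_le_sub_context hP hu hspec hsd hc hg fun i => ?_
  by_cases hi : i ∈ A
  · refine leC_trans hP hgAc ((leC_sub_sub_iff u).2 ?_)
    exact leC_sum_of_mem hP hu (fun j _ => hcP j) hi
  · refine leC_trans hP hgA ?_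
    rw [← leC_sub_sub_iff u, sub_sub_cancel, hcompl]
    exact leC_sum_of_mem hP hu (fun j _ => hcP j) (Finset.mem_compl.2 hi)

lemma sum_mul_eq_zero_iff_sum_filter_pos {ι : Type*} (s : Finset ι) {μ a : ι → ℝ}
    (hμ : ∀ i, 0 ≤ μ i) (ha : ∀ i, 0 ≤ a i) :
    ∑ i ∈ s, μ i * a i = 0 ↔ ∑ i ∈ s with 0 < μ i, a i = 0 := by
  rw [Finset.sum_eq_zero_iff_of_nonneg fun i _ => mul_nonneg (hμ i) (ha i),
    Finset.sum_eq_zero_iff_of_nonneg fun i _ => ha i]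
  simp only [Finset.mem_filter, mul_eq_zero, and_imp]
  refine forall₂_congr fun i _ => ?_
  rw [(hμ i).lt_iff_ne', or_iff_not_imp_left]

def IsSharpSupport (P : Set V) (u x p : V) : Prop :=
  Sharp P u p ∧ leC P x p ∧ ∀ q, Sharp P u q → leC P x q → leC P p q

lemma isSharpSupport_of_state_eq_zero_iff (hsd : SharplyDet P u) {x p : V} (hx : x ∈ Eff P u)
    (hp : Sharp P u p) (h : ∀ s, IsState P u s → (s x = 0 ↔ s p = 0)) :
    IsSharpSupport P u x p := by
  refine ⟨hp, le_of_forall_state_eq_zero hsd hp hx fun s hs => (h s hs).2,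
    fun q hq hxq => le_of_forall_state_eq_zero hsd hq hp.1 fun s hs hsq => (h s hs).1 ?_⟩
  exact le_antisymm (hsq ▸ hs.mono hxq) (hs.1 x (mem_eff_iff.1 hx).1)

lemma exists_isSharpSupport (hP : IsCone P) (hu : u ∈ P) (hspec : Spectral P u)
    (hsd : SharplyDet P u) {x : V} (hx : x ∈ Eff P u) : ∃ p, IsSharpSupport P u x p := by
  classical
  obtain ⟨n, c, μ, hc, hμ, rfl⟩ := hspec x hx
  refine ⟨_, isSharpSupport_of_state_eq_zero_iff hsd hx
    (sharp_sum_context hP hu hspec hsd hc (Finset.univ.filter fun i => 0 < μ i)) fun s hs => ?_⟩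
  simp only [map_sum, map_smul, smul_eq_mul]
  exact sum_mul_eq_zero_iff_sum_filter_pos _ (fun i => (hμ i).1)
    fun i => hs.1 _ (mem_eff_iff.1 (hc.1 i).1.1).1

lemma isSupS_of_isSharpSupport_midpoint (hP : IsCone P) (hsd : SharplyDet P u) {f g p : V}
    (hf : Sharp P u f) (hg : Sharp P u g)
    (hp : IsSharpSupport P u ((2⁻¹ : ℝ) • (f + g)) p) : IsSupS P u f g p := by
  have half_le : ∀ {a b : V}, b ∈ P → leC P ((2⁻¹ : ℝ) • a) ((2⁻¹ : ℝ) • (a + b)) :=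
    fun hb => by
      rw [leC, smul_add, add_sub_cancel_left]
      exact hP.2.1 _ (by norm_num) _ hb
  refine ⟨hp.1, ?_, ?_, fun r hr hfr hgr => hp.2.2 r hr ?_⟩
  · exact le_of_smul_le hsd hf.1 hp.1 (by norm_num)
      (leC_trans hP (half_le (mem_eff_iff.1 hg.1).1) hp.2.1)
  · rw [add_comm] at hp
    exact le_of_smul_le hsd hg.1 hp.1 (by norm_num)
      (leC_trans hP (half_le (mem_eff_iff.1 hf.1).1) hp.2.1)
  · rw [leC, show r - (2⁻¹ : ℝ) • (f + g) = (2⁻¹ : ℝ) • ((r - f) + (r - g)) by module]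
    exact hP.2.1 _ (by norm_num) _ (hP.1 _ hfr _ hgr)

lemma exists_isSupS (hP : IsCone P) (hu : u ∈ P) (hspec : Spectral P u)
    (hsd : SharplyDet P u) {f g : V} (hf : Sharp P u f) (hg : Sharp P u g) :
    ∃ p, IsSupS P u f g p := by
  have hmid : (2⁻¹ : ℝ) • (f + g) ∈ Eff P u := by
    rw [mem_eff_iff, show u - (2⁻¹ : ℝ) • (f + g) = (2⁻¹ : ℝ) • ((u - f) + (u - g)) by module]
    have hf' := mem_eff_iff.1 hf.1
    have hg' := mem_eff_iff.1 hg.1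
    exact ⟨hP.2.1 _ (by norm_num) _ (hP.1 _ hf'.1 _ hg'.1),
      hP.2.1 _ (by norm_num) _ (hP.1 _ hf'.2 _ hg'.2)⟩
  obtain ⟨p, hp⟩ := exists_isSharpSupport hP hu hspec hsd hmid
  exact ⟨p, isSupS_of_isSharpSupport_midpoint hP hsd hf hg hp⟩

lemma IsSupS.isInfS_sub {f g p : V} (hp : IsSupS P u (u - f) (u - g) p) :
    IsInfS P u f g (u - p) := by
  refine ⟨hp.1.compl, ?_, ?_, fun r hr hrf hrg => ?_⟩
  · rw [← leC_sub_sub_iff u, sub_sub_cancel]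
    exact hp.2.1
  · rw [← leC_sub_sub_iff u, sub_sub_cancel]
    exact hp.2.2.1
  · rw [← leC_sub_sub_iff u, sub_sub_cancel]
    exact hp.2.2.2 _ hr.compl ((leC_sub_sub_iff u).2 hrf) ((leC_sub_sub_iff u).2 hrg)

lemma exists_isInfS (hP : IsCone P) (hu : u ∈ P) (hspec : Spectral P u)
    (hsd : SharplyDet P u) {f g : V} (hf : Sharp P u f) (hg : Sharp P u g) :
    ∃ q, IsInfS P u f g q := by
  obtain ⟨p, hp⟩ := exists_isSupS hP hu hspec hsd hf.compl hg.compl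
  exact ⟨u - p, hp.isInfS_sub⟩

/-- Orthomodularity: the support of `g - f` lies below both `g` and `u - f`, hence below
`q = g ∧ (u - f)`, so `g = f + (g - f) ≤ f + q ≤ f ∨ q`. -/
lemma eq_of_isInfS_of_isSupS (hP : IsCone P) (hu : u ∈ P) (hspec : Spectral P u)
    (hsd : SharplyDet P u) {f g q p : V} (hf : Sharp P u f) (hg : Sharp P u g)
    (hfg : leC P f g) (hq : IsInfS P u g (u - f) q) (hp : IsSupS P u f q p) : p = g := by
  have hf' := mem_eff_iff.1 hf.1
  have hq' := mem_eff_iff.1 hq.1.1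
  have hdE : g - f ∈ Eff P u := by
    refine mem_eff_iff.2 ⟨hfg, ?_⟩
    rw [show u - (g - f) = (u - g) + f by abel]
    exact hP.1 _ (mem_eff_iff.1 hg.1).2 _ hf'.1
  obtain ⟨w, hw⟩ := exists_isSharpSupport hP hu hspec hsd hdE
  have hdg : leC P (g - f) g := by rw [leC, sub_sub_cancel]; exact hf'.1
  have hduf : leC P (g - f) (u - f) := by
    rw [leC, sub_sub_sub_cancel_right]; exact (mem_eff_iff.1 hg.1).2
  have hdq : leC P (g - f) q :=
    leC_trans hP hw.2.1 (hq.2.2.2 w hw.1 (hw.2.2 g hg hdg) (hw.2.2 _ hf.compl hduf))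
  have hfqE : f + q ∈ Eff P u := by
    refine mem_eff_iff.2 ⟨hP.1 _ hf'.1 _ hq'.1, ?_⟩
    rw [sub_add_eq_sub_sub]
    exact hq.2.2.1
  have hfqp : leC P (f + q) p := by
    refine le_of_forall_state_eq_zero hsd hp.1 hfqE fun s hs hsp => ?_
    have := hs.mono hp.2.1
    have := hs.mono hp.2.2.1
    have := hs.1 f hf'.1
    have := hs.1 q hq'.1
    rw [map_add]
    linarith
  refine leC_antisymm hP (hp.2.2.2 g hg hfg hq.2.1) (leC_trans hP ?_ hfqp)
  rw [leC, show f + q - g = q - (g - f) by abel]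
  exact hdq

end

/-- In a spectral effect algebra with sharply determining state space, the set of
sharp elements with the induced order and orthocomplement `f ↦ u - f` is an
orthomodular lattice. -/
theorem stmt_18 (P : Set V) (hP : IsCone P) (u : V) (hu : u ∈ P)
    (hspec : Spectral P u) (hsd : SharplyDet P u) :
    -- (i) `S(E)` is a lattice with least element `0` and greatest element `u`
    ((∀ f g, Sharp P u f → Sharp P u g →
        (∃ p, IsSupS P u f g p) ∧ (∃ q, IsInfS P u f g q)) ∧
      Sharp P u 0 ∧ Sharp P u u ∧
      (∀ f, Sharp P u f → leC P 0 f ∧ leC P f u)) ∧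
    -- (ii) the orthocomplement `f ↦ u - f`
    ((∀ f, Sharp P u f → Sharp P u (u - f)) ∧
      (∀ f : V, u - (u - f) = f) ∧
      (∀ f g, Sharp P u f → Sharp P u g → leC P f g → leC P (u - g) (u - f))) ∧
    -- (iii) `f ∧ (u - f) = 0`
    (∀ f, Sharp P u f → ∀ q, IsInfS P u f (u - f) q → q = 0) ∧
    -- (iv) orthomodularity: `f ≤ g → g = f ∨ (g ∧ (u - f))`
    (∀ f g, Sharp P u f → Sharp P u g → leC P f g →
      ∀ q, IsInfS P u g (u - f) q → ∀ p, IsSupS P u f q p → p = g) := by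
  refine ⟨⟨fun f g hf hg => ⟨exists_isSupS hP hu hspec hsd hf hg,
      exists_isInfS hP hu hspec hsd hf hg⟩, sharp_zero hP hu,
      by simpa using (sharp_zero hP hu).compl, fun f hf => hf.1⟩,
    ⟨fun f hf => hf.compl, sub_sub_cancel u, fun f g _ _ hfg => (leC_sub_sub_iff u).2 hfg⟩,
    fun f hf q hq => hf.2 q hq.1.1 hq.2.1 hq.2.2.1,
    fun f g hf hg hfg q hq p hp => eq_of_isInfS_of_isSupS hP hu hspec hsd hf hg hfg hq hp⟩
end

section
/- In the square-state-space effect algebra E(S) = [0,u] ⊆ ℝ³, the element h = (1/2)(f + g) = (1/2, 1/2, 0) is sharp but not extremal. -/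
variable {V : Type*} [AddCommGroup V] [Module ℝ V]

/-- In the square-state-space effect algebra, the element `h = (1/2)(f + g)` is
sharp but not extremal. -/
theorem stmt_19 :
    let f : Fin 3 → ℝ := ![1, 0, 0]
    let g : Fin 3 → ℝ := ![0, 1, 0]
    let u : Fin 3 → ℝ := ![0, 0, 1]
    let P : Set (Fin 3 → ℝ) :=
      {v | ∃ α β γ δ : ℝ, 0 ≤ α ∧ 0 ≤ β ∧ 0 ≤ γ ∧ 0 ≤ δ ∧
        v = α • f + β • g + γ • (u - f) + δ • (u - g)}
    let h : Fin 3 → ℝ := (1 / 2 : ℝ) • (f + g)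
    Sharp P u h ∧
    ¬ (∀ g₁ ∈ Eff P u, ∀ g₂ ∈ Eff P u, ∀ t : ℝ, 0 < t → t < 1 →
        h = t • g₁ + (1 - t) • g₂ → h = g₁ ∧ h = g₂) := by
  intro f g u P h
  have key : ∀ v ∈ P, 0 ≤ v 2 ∧ 0 ≤ v 0 + v 2 ∧ 0 ≤ v 1 + v 2 ∧ 0 ≤ v 0 + v 1 + v 2 := by
    rintro v ⟨α, β, γ, δ, hα, hβ, hγ, hδ, rfl⟩
    simp only [f, g, u, Pi.add_apply, Pi.smul_apply, Pi.sub_apply, smul_eq_mul,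
      Matrix.cons_val_zero, Matrix.cons_val_one, Matrix.head_cons, Matrix.cons_val_two,
      Matrix.tail_cons]
    refine ⟨by linarith, by linarith, by linarith, by linarith⟩
  have hfP : f ∈ P := ⟨1, 0, 0, 0, by norm_num, by norm_num, by norm_num, by norm_num, by
    funext i; fin_cases i <;> simp [f, g, u]⟩
  have hgP : g ∈ P := ⟨0, 1, 0, 0, by norm_num, by norm_num, by norm_num, by norm_num, by
    funext i; fin_cases i <;> simp [f, g, u]⟩
  have hufP : u - f ∈ P := ⟨0, 0, 1, 0, by norm_num, by norm_num, by norm_num, by norm_num, by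
    funext i; fin_cases i <;> simp [f, g, u]⟩
  have hugP : u - g ∈ P := ⟨0, 0, 0, 1, by norm_num, by norm_num, by norm_num, by norm_num, by
    funext i; fin_cases i <;> simp [f, g, u]⟩
  have hhP : h ∈ P := ⟨1/2, 1/2, 0, 0, by norm_num, by norm_num, by norm_num, by norm_num, by
    funext i; fin_cases i <;> simp [h, f, g, u] <;> norm_num⟩
  have huhP : u - h ∈ P := ⟨0, 0, 1/2, 1/2, by norm_num, by norm_num, by norm_num, by norm_num, by
    funext i; fin_cases i <;> simp [h, f, g, u] <;> norm_num⟩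
  constructor
  · refine ⟨⟨by simpa [leC] using hhP, by simpa [leC] using huhP⟩, ?_⟩
    rintro p ⟨hp0, hpu⟩ hph hpuh
    have k1 := key p (by simpa [leC] using hp0)
    have k2 := key (h - p) hph
    have k3 := key (u - h - p) hpuh
    have e1 : (h - p) 2 = -(p 2) := by
      simp [h, f, g, u]
    have e2 : (u - h - p) 0 + (u - h - p) 1 + (u - h - p) 2 = -(p 0) - p 1 - p 2 := by
      simp [h, f, g, u]; ring
    have hp2 : p 2 = 0 := by
      have := k2.1; rw [e1] at this; linarith [k1.1]
    have hp01 : p 0 + p 1 + p 2 ≤ 0 := by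
      have := k3.2.2.2; rw [e2] at this; linarith
    have hp0' : p 0 = 0 := by linarith [k1.2.1, k1.2.2.1]
    have hp1' : p 1 = 0 := by linarith [k1.2.1, k1.2.2.1]
    funext i; fin_cases i
    · exact hp0'
    · exact hp1'
    · exact hp2
  · intro H
    have hfE : f ∈ Eff P u := ⟨by simpa [leC] using hfP, by simpa [leC] using hufP⟩
    have hgE : g ∈ Eff P u := ⟨by simpa [leC] using hgP, by simpa [leC] using hugP⟩
    have heq : h = (1/2 : ℝ) • f + (1 - 1/2 : ℝ) • g := by
      funext i; fin_cases i <;> simp [h, f, g] <;> norm_num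
    have := (H f hfE g hgE (1/2) (by norm_num) (by norm_num) heq).1
    have h0 : h 0 = f 0 := by rw [this]
    norm_num [h, f, g] at h0
end
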